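/- arXiv:2401.05611 — 2 statements merged into one kernel-verified Lean document; each statement's English description precedes it below -/
import Mathlib

section
/- Let (V,C') be an instance of Positive 1-in-3 SAT in which each variable appears in exactly three clauses, and let U be the unrooted phylogenetic network constructed from (V,C') via the caterpillar gadget and the degree-5 root gadget; every non-leaf vertex of U has degree 5. Then there is a truth assignment for V that sets exactly one variable of each clause in C' to T if and only if U has a funneled C_A-orientation, where C is the class of rooted phylogenetic networks. -/
/-!
Common definitions: rooted (pseudo/phylogenetic) networks represented as arc
relations `D : V → V → Prop` on a vertex type `V`, with in/out-degrees measured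
by `Set.ncard`, together with the orientation notions (Variant A, Variant B,
orientations of connector networks) from the paper.
-/

section Prelude

universe u
variable {V : Type u}

/-- In-degree of `v` in the digraph with arc relation `D`. -/
noncomputable def inDeg (D : V → V → Prop) (v : V) : ℕ := Set.ncard {u | D u v}

/-- Out-degree of `v` in the digraph with arc relation `D`. -/
noncomputable def outDeg (D : V → V → Prop) (v : V) : ℕ := Set.ncard {u | D v u}

/-- A digraph is acyclic if it has no directed cycle. -/
def Acyclic (D : V → V → Prop) : Prop := ∀ v, ¬ Relation.TransGen D v v

/-- A tree vertex: in-degree 1 and out-degree at least 1. -/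
def IsTreeVertex (D : V → V → Prop) (v : V) : Prop := inDeg D v = 1 ∧ 1 ≤ outDeg D v

/-- A leaf (sink) of a digraph. -/
def IsLeafVertex (D : V → V → Prop) (v : V) : Prop := outDeg D v = 0

/-- Tree-child: every non-leaf vertex has a child that is a tree vertex or a leaf. -/
def TreeChild (D : V → V → Prop) : Prop :=
  ∀ v, ¬ IsLeafVertex D v → ∃ u, D v u ∧ (IsTreeVertex D u ∨ IsLeafVertex D u)

/-- Funneled: every reticulation (in-degree at least 2) has out-degree 1. -/
def Funneled (D : V → V → Prop) : Prop := ∀ v, 2 ≤ inDeg D v → outDeg D v = 1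

/-- An arc `(a,b)` is a shortcut if there is another directed path from `a` to `b`. -/
def IsShortcut (D : V → V → Prop) (a b : V) : Prop :=
  D a b ∧ ∃ c, D a c ∧ Relation.TransGen D c b

/-- Normal: tree-child and without shortcuts. -/
def NormalNet (D : V → V → Prop) : Prop := TreeChild D ∧ ∀ a b, ¬ IsShortcut D a b

/-- `D` is a rooted pseudo network with root `ρ` whose set of leaves is `X`
(leaves are labelled by themselves). -/
def IsRootedPseudoNetwork (D : V → V → Prop) (ρ : V) (X : Set V) : Prop :=
  Acyclic D ∧ (∀ v, ¬ D v v) ∧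
  inDeg D ρ = 0 ∧ 1 ≤ outDeg D ρ ∧
  (∀ v, inDeg D v = 0 → v = ρ) ∧
  (∀ v, outDeg D v = 0 → inDeg D v = 1) ∧
  {v | outDeg D v = 0} = X ∧
  (∀ v, v ≠ ρ → outDeg D v ≠ 0 → 1 ≤ inDeg D v ∧ 1 ≤ outDeg D v)

/-- `D` is a rooted phylogenetic network with root `ρ` and leaf set `X`:
additionally every internal vertex has in-degree 1 and out-degree ≥ 2, or
in-degree ≥ 2 and out-degree ≥ 1. -/
def IsRootedPhyloNetwork (D : V → V → Prop) (ρ : V) (X : Set V) : Prop :=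
  Acyclic D ∧ (∀ v, ¬ D v v) ∧
  inDeg D ρ = 0 ∧ 1 ≤ outDeg D ρ ∧
  (∀ v, inDeg D v = 0 → v = ρ) ∧
  (∀ v, outDeg D v = 0 → inDeg D v = 1) ∧
  {v | outDeg D v = 0} = X ∧
  (∀ v, v ≠ ρ → outDeg D v ≠ 0 →
    (inDeg D v = 1 ∧ 2 ≤ outDeg D v) ∨ (2 ≤ inDeg D v ∧ 1 ≤ outDeg D v))

/-- `{u,w} = {a,b}` as unordered pairs. -/
def SamePair (u w a b : V) : Prop := (u = a ∧ w = b) ∨ (u = b ∧ w = a)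

/-- A Variant-A orientation of the undirected graph `adj` obtained by
subdividing the edge `{a,b}` with a new root vertex `none` and directing all
edges; `D` is the resulting arc relation on `Option V` (the root is `none`). -/
def VariantA (adj : V → V → Prop) (a b : V) (D : Option V → Option V → Prop) : Prop :=
  adj a b ∧
  D none (some a) ∧ D none (some b) ∧
  (∀ o, ¬ D o none) ∧
  (∀ u, D none (some u) → u = a ∨ u = b) ∧
  (∀ u w : V, D (some u) (some w) → adj u w ∧ ¬ SamePair u w a b) ∧
  (∀ u w : V, adj u w → ¬ SamePair u w a b → (D (some u) (some w) ↔ ¬ D (some w) (some u)))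

/-- `D` assigns to each edge of `adj` exactly one direction (used for
Variant-B orientations and for orientations of connector networks). -/
def IsOrientation (adj D : V → V → Prop) : Prop :=
  (∀ a b, D a b → adj a b) ∧ (∀ a b, adj a b → (D a b ↔ ¬ D b a))

/-- An orientation of a connector network with labelled leaves `L` and
connector leaves `Uc` that is acyclic, in which every labelled leaf has
out-degree 0 and every vertex not in `L ∪ Uc` has in-degree ≥ 1 and
out-degree ≥ 1 (the standing hypotheses for the compatibility notions). -/
def GoodOrientation (adj D : V → V → Prop) (L Uc : Set V) : Prop :=
  IsOrientation adj D ∧ Acyclic D ∧ (∀ v ∈ L, outDeg D v = 0) ∧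
  (∀ v, v ∉ L ∪ Uc → 1 ≤ inDeg D v ∧ 1 ≤ outDeg D v)

/-- F-compatible: every vertex of in-degree at least 2 has out-degree 1. -/
def FCompatible (D : V → V → Prop) : Prop := ∀ v, 2 ≤ inDeg D v → outDeg D v = 1

/-- TC-compatible orientation of a connector network. -/
def TCCompatible (D : V → V → Prop) (L Uc : Set V) : Prop :=
  ∀ v, v ∉ L ∪ Uc → ∃ u, D v u ∧ (u ∈ L ∪ Uc ∨ (inDeg D u = 1 ∧ 1 ≤ outDeg D u))

/-- Strongly TC-compatible orientation of a connector network. -/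
def StrongTCCompatible (D : V → V → Prop) (L Uc : Set V) : Prop :=
  ∀ v, v ∉ L ∪ Uc → ∃ u, D v u ∧ (u ∈ L ∨ (inDeg D u = 1 ∧ 1 ≤ outDeg D u))

end Prelude

namespace PaperFormalization

/-- Vertices of the unrooted phylogenetic network `U` constructed from an
instance of Positive 1-in-3 SAT (variables `Fin n`, clauses
`cl : Fin m → Finset (Fin n)` of size 3, each variable in exactly three
clauses): the degree-5 root gadget `s,u,u',v,v'` with its pendant leaves
(its connector leaf `r` identified with the caterpillar connector leaf and
the resulting degree-2 vertex suppressed, giving the edge `{s,p_n}`), the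
caterpillar gadget `p i` with pendant leaves `pl i, pl' i, pl0`, variable
vertices `x i` with pendant leaves `xl i`, and clause vertices `c j` each
with two pendant leaves `cleaf j k`. -/
inductive WV (n m : ℕ) : Type
  | s | u | u' | v | v'
  | ul (k : Fin 2) | ul' (k : Fin 2) | vl (k : Fin 3) | vl' (k : Fin 3)
  | p (i : Fin n) | pl (i : Fin n) | pl' (i : Fin n) | pl0
  | x (i : Fin n) | xl (i : Fin n)
  | c (j : Fin m) | cleaf (j : Fin m) (k : Fin 2)

/-- The edges of `U` (one fixed orientation of each edge). -/
def wBase {n m : ℕ} (cl : Fin m → Finset (Fin n)) : WV n m → WV n m → Prop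
  | .s, .u => True
  | .s, .u' => True
  | .s, .v => True
  | .s, .v' => True
  | .u, .u' => True
  | .u, .v => True
  | .u', .v' => True
  | .u, .ul _ => True
  | .u', .ul' _ => True
  | .v, .vl _ => True
  | .v', .vl' _ => True
  | .s, .p i => (i : ℕ) = n - 1
  | .p i, .p j => (i : ℕ) + 1 = (j : ℕ)
  | .p i, .x j => i = j
  | .p i, .pl j => i = j
  | .p i, .pl' j => i = j
  | .p i, .pl0 => (i : ℕ) = 0
  | .x i, .xl j => i = j
  | .x i, .c j => i ∈ cl j
  | .c j, .cleaf j' _ => j = j'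
  | _, _ => False

/-- Adjacency relation of `U`. -/
def wAdj {n m : ℕ} (cl : Fin m → Finset (Fin n)) (a b : WV n m) : Prop :=
  wBase cl a b ∨ wBase cl b a

/-- The (labelled) leaves of `U`. -/
def wLeaves (n m : ℕ) : Set (WV n m) :=
  {w | match w with
    | .ul _ => True
    | .ul' _ => True
    | .vl _ => True
    | .vl' _ => True
    | .pl _ => True
    | .pl' _ => True
    | .pl0 => True
    | .xl _ => True
    | .cleaf _ _ => True
    | _ => False}

end PaperFormalization

/-!
Given a 1-in-3 assignment, root `U` on the edge `{u, u'}`, direct the caterpillar from `s` down to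
`p 0`, and let every true variable vertex point to its clause vertices while every false one is
entered from them. Each vertex is then a leaf, a tree vertex, or a reticulation with one child.

Conversely, in a funneled orientation a vertex with two pendant leaves is a tree vertex, and a
tree vertex points to all its neighbours but its parent. If the root were not at one of
`s, u, u', v, v'`, then `u, u', v, v'` would be such tree vertices; an arc from `s` to any of them
closes a directed triangle, and if all four point into `s`, then `u` and `u'` are each other's
parent. So the caterpillar is entered at its top and directed towards the variable vertices. A
variable vertex that points to one clause vertex is then a tree vertex and so points to all of
them, while a clause vertex, a tree vertex, has a single parent: the variables whose vertices point
to clause vertices form a 1-in-3 assignment.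
-/

section Digraph

variable {α : Type*} {D : α → α → Prop} {u v : α}

theorem Acyclic.of_rank (f : α → ℕ) (hf : ∀ a b, D a b → f a < f b) : Acyclic D := fun v hv =>
  lt_irrefl (f v) <| by
    simpa [Relation.transGen_eq_self, Function.onFun] using
      Relation.TransGen.lift (p := (· < ·)) f hf v v hv

theorem inDeg_eq_one_iff : inDeg D v = 1 ↔ ∃! u, D u v := by
  simp only [inDeg, Set.ncard_eq_one, Set.ext_iff, Set.mem_ofPred_eq, Set.mem_singleton_iff]
  exact ⟨fun ⟨a, ha⟩ => ⟨a, (ha a).2 rfl, fun y hy => (ha y).1 hy⟩,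
    fun ⟨a, ha, hu⟩ => ⟨a, fun y => ⟨hu y, fun h => h ▸ ha⟩⟩⟩

theorem outDeg_eq_one_iff : outDeg D v = 1 ↔ ∃! u, D v u :=
  inDeg_eq_one_iff (D := flip D)

theorem outDeg_eq_zero_iff [Finite α] : outDeg D v = 0 ↔ ∀ u, ¬ D v u := by
  rw [outDeg, Set.ncard_eq_zero, Set.eq_empty_iff_forall_notMem]
  rfl

theorem two_le_inDeg [Finite α] {a b : α} (ha : D a v) (hb : D b v) (hab : a ≠ b) :
    2 ≤ inDeg D v :=
  (Set.one_lt_ncard_iff).2 ⟨a, b, ha, hb, hab⟩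

theorem two_le_outDeg [Finite α] {a b : α} (ha : D v a) (hb : D v b) (hab : a ≠ b) :
    2 ≤ outDeg D v :=
  (Set.one_lt_ncard_iff).2 ⟨a, b, ha, hb, hab⟩

theorem Relation.ReflTransGen.exists_arc_leaving {S : Set α} {x y : α}
    (h : Relation.ReflTransGen D x y) (hx : x ∈ S) (hy : y ∉ S) : ∃ a ∈ S, ∃ b ∉ S, D a b := by
  induction h with
  | refl => exact absurd hx hy
  | @tail b c _ hbc ih =>
    by_cases hb : b ∈ S
    · exact ⟨b, hb, c, hy, hbc⟩
    · exact ih hb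

def FunneledDegrees (D : α → α → Prop) (X : Set α) (v : α) : Prop :=
  (v ∈ X ∧ inDeg D v = 1 ∧ outDeg D v = 0) ∨ (v ∉ X ∧ inDeg D v = 1 ∧ 2 ≤ outDeg D v) ∨
    (v ∉ X ∧ 2 ≤ inDeg D v ∧ outDeg D v = 1)

theorem isRootedPhyloNetwork_and_funneled_of_degrees {ρ : α} {X : Set α} (hD : Acyclic D)
    (hρin : inDeg D ρ = 0) (hρout : 1 ≤ outDeg D ρ) (hρX : ρ ∉ X)
    (hdeg : ∀ v, v ≠ ρ → FunneledDegrees D X v) : IsRootedPhyloNetwork D ρ X ∧ Funneled D := by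
  have hρ : ∀ {v}, v = ρ → v ∉ X ∧ inDeg D v = 0 ∧ 1 ≤ outDeg D v := by
    rintro v rfl
    exact ⟨hρX, hρin, hρout⟩
  refine ⟨⟨hD, fun v hv => hD v (.single hv), hρin, hρout, fun v hv => ?_, fun v hv => ?_,
    Set.ext fun v => ⟨fun hv => ?_, fun hv => ?_⟩, fun v hv hout => ?_⟩, fun v hv => ?_⟩
  all_goals by_cases hvρ : v = ρ
  all_goals first
    | have := hρ hvρ; simp_all
    | rcases hdeg v hvρ with ⟨h, h1, h2⟩ | ⟨h, h1, h2⟩ | ⟨h, h1, h2⟩ <;> simp_all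

namespace IsRootedPhyloNetwork

variable {ρ : α} {X : Set α}

theorem not_arc_of_mem [Finite α] (hN : IsRootedPhyloNetwork D ρ X) (hv : v ∈ X) (u : α) :
    ¬ D v u := by
  rw [← hN.2.2.2.2.2.2.1] at hv
  exact outDeg_eq_zero_iff.1 hv u

theorem exists_arc_to (hN : IsRootedPhyloNetwork D ρ X) (hv : v ≠ ρ) : ∃ u, D u v :=
  Set.nonempty_of_ncard_ne_zero fun h => hv (hN.2.2.2.2.1 v h)

theorem inDeg_eq_one_of_arcs [Finite α] (hN : IsRootedPhyloNetwork D ρ X) (hF : Funneled D)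
    (hv : v ≠ ρ) {a b : α} (ha : D v a) (hb : D v b) (hab : a ≠ b) : inDeg D v = 1 := by
  have hout := two_le_outDeg ha hb hab
  have hin : inDeg D v ≠ 0 := fun h => hv (hN.2.2.2.2.1 v h)
  by_contra h
  have := hF v (by omega)
  omega

theorem reflTransGen_root [Finite α] (hN : IsRootedPhyloNetwork D ρ X) (v : α) :
    Relation.ReflTransGen D ρ v := by
  have : Std.Irrefl (Relation.TransGen D) := ⟨hN.1⟩
  have hwf : WellFounded D := Subrelation.wf Relation.TransGen.single
    (Finite.wellFounded_of_trans_of_irrefl (Relation.TransGen D))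
  induction v using hwf.induction with
  | _ v ih =>
    by_cases hv : v = ρ
    · exact hv ▸ .refl
    · obtain ⟨u, hu⟩ := hN.exists_arc_to hv
      exact (ih u hu).tail hu

end IsRootedPhyloNetwork

theorem SamePair.symm {w a b : α} (h : SamePair u w a b) : SamePair w u a b := by
  rcases h with ⟨rfl, rfl⟩ | ⟨rfl, rfl⟩
  exacts [.inr ⟨rfl, rfl⟩, .inl ⟨rfl, rfl⟩]

theorem SamePair.eq_or_eq {w a b : α} (h : SamePair u w a b) : w = a ∨ w = b := by
  rcases h with ⟨-, rfl⟩ | ⟨-, rfl⟩ <;> simp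

namespace VariantA

variable {adj : α → α → Prop} {a b w : α} {D : Option α → Option α → Prop}

theorem arc_or_arc (h : VariantA adj a b D) (huw : adj u w) (hne : ¬ SamePair u w a b) :
    D (some u) (some w) ∨ D (some w) (some u) := by
  by_cases hwu : D (some w) (some u)
  · exact .inr hwu
  · exact .inl ((h.2.2.2.2.2.2 u w huw hne).2 hwu)

theorem not_arc_of_arc (h : VariantA adj a b D) (huw : D (some u) (some w)) :
    ¬ D (some w) (some u) :=
  (h.2.2.2.2.2.2 u w (h.2.2.2.2.2.1 u w huw).1 (h.2.2.2.2.2.1 u w huw).2).1 huw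

theorem adj_of_arc (h : VariantA adj a b D) (huw : D (some u) (some w)) : adj u w :=
  (h.2.2.2.2.2.1 u w huw).1

theorem arc_of_inDeg_eq_one (h : VariantA adj a b D) (h1 : inDeg D (some u) = 1)
    {z : Option α} (hz : D z (some u)) (hzw : z ≠ some w) (huw : adj u w)
    (hne : ¬ SamePair u w a b) : D (some u) (some w) :=
  (h.arc_or_arc huw hne).resolve_right fun hwu =>
    hzw ((inDeg_eq_one_iff.1 h1).unique hz hwu)

theorem arc_to_leaf [Finite α] {L : Set α} (h : VariantA adj a b D)
    (hN : IsRootedPhyloNetwork D none (some '' L)) (hw : w ∈ L) (huw : adj u w)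
    (hne : ¬ SamePair u w a b) : D (some u) (some w) :=
  (h.arc_or_arc huw hne).resolve_right (hN.not_arc_of_mem ⟨w, hw, rfl⟩ _)

theorem inDeg_eq_one_of_leaves [Finite α] {L : Set α} (h : VariantA adj a b D)
    (hN : IsRootedPhyloNetwork D none (some '' L)) (hF : Funneled D) (l l' : α)
    (hl : l ∈ L) (hl' : l' ∈ L) (hll' : l ≠ l') (hul : adj u l) (hul' : adj u l')
    (hne : ¬ SamePair u l a b) (hne' : ¬ SamePair u l' a b) : inDeg D (some u) = 1 :=
  hN.inDeg_eq_one_of_arcs hF (by simp) (h.arc_to_leaf hN hl hul hne)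
    (h.arc_to_leaf hN hl' hul' hne') (by simpa using hll')

end VariantA

end Digraph

namespace PaperFormalization

deriving instance Fintype for WV

section Forward

variable {n m : ℕ} (cl : Fin m → Finset (Fin (n + 1))) (β : Fin (n + 1) → Bool)

def satArc : WV (n + 1) m → WV (n + 1) m → Prop
  | .u, .s | .u', .s | .v, .s | .v', .s | .u, .v | .u', .v' => True
  | .u, .ul _ | .u', .ul' _ | .v, .vl _ | .v', .vl' _ => True
  | .s, .p i => (i : ℕ) = n
  | .p i, .p j => (j : ℕ) + 1 = i
  | .p i, .x j | .p i, .pl j | .p i, .pl' j | .x i, .xl j => i = j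
  | .p i, .pl0 => (i : ℕ) = 0
  | .x i, .c j => i ∈ cl j ∧ β i = true
  | .c j, .x i => i ∈ cl j ∧ β i = false
  | .c j, .cleaf j' _ => j = j'
  | _, _ => False

def satOrientation : Option (WV (n + 1) m) → Option (WV (n + 1) m) → Prop
  | none, some w => w = .u ∨ w = .u'
  | some w, some w' => satArc cl β w w'
  | _, none => False

/-- The parent of `w` in `satOrientation cl β`; meaningless (`none`) at `s` and at clause
vertices, and wrong at false variable vertices, which have several parents. -/
def satParent : WV (n + 1) m → Option (WV (n + 1) m)
  | .s | .c _ | .u | .u' => none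
  | .v | .ul _ => some .u
  | .v' | .ul' _ => some .u'
  | .vl _ => some .v
  | .vl' _ => some .v'
  | .p i => if h : (i : ℕ) < n then some (.p ⟨i + 1, by omega⟩) else some .s
  | .pl i | .pl' i | .x i => some (.p i)
  | .pl0 => some (.p 0)
  | .xl i => some (.x i)
  | .cleaf j _ => some (.c j)

def satRank : Option (WV (n + 1) m) → ℕ
  | none => 0
  | some .u | some .u' => 1
  | some .v | some .v' => 2
  | some .s => 3
  | some (.p i) => n + 4 - i
  | some (.x i) => if β i then n + 5 else n + 7
  | some (.c _) => n + 6
  | _ => n + 8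

local notation "F" => satOrientation cl β

theorem satOrientation_acyclic : Acyclic F :=
  Acyclic.of_rank (satRank β) fun
    | none, some w, h => by rcases h with rfl | rfl <;> simp [satRank]
    | some w, some w', h => by
      cases w <;> cases w' <;> simp_all [satOrientation, satArc, satRank] <;>
        (try split_ifs) <;> omega

theorem satOrientation_variantA : VariantA (wAdj cl) .u .u' F := by
  refine ⟨.inl trivial, .inl rfl, .inr rfl, fun o h => ?_, fun w h => h,
    fun w w' h => ?_, fun w w' hadj hne => ?_⟩
  · cases o <;> simp [satOrientation] at h
  · cases w <;> cases w' <;> simp_all [satOrientation, satArc, wAdj, wBase, SamePair]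
  · cases w <;> cases w' <;> simp_all [satOrientation, satArc, wAdj, wBase, SamePair]
    omega

theorem satOrientation_iff_eq_satParent {w : WV (n + 1) m} (hs : w ≠ .s)
    (hc : ∀ j, w ≠ .c j) (hx : ∀ i, w = .x i → β i = true) (y : Option (WV (n + 1) m)) :
    F y (some w) ↔ y = satParent w := by
  rcases y with _ | y
  · cases w <;> simp_all [satOrientation, satParent]
    split_ifs <;> simp
  · cases w <;> cases y <;>
      simp_all [satOrientation, satArc, satParent, Fin.ext_iff, -Fin.val_eq_zero_iff]
    all_goals first
      | omega
      | exact absurd rfl (hc _)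
      | split_ifs <;> simp [Fin.ext_iff, -Fin.val_eq_zero_iff] <;> omega

theorem inDeg_satOrientation_eq_one {w : WV (n + 1) m} (hs : w ≠ .s)
    (hc : ∀ j, w ≠ .c j) (hx : ∀ i, w = .x i → β i = true) : inDeg F (some w) = 1 :=
  inDeg_eq_one_iff.2 ⟨satParent w, (satOrientation_iff_eq_satParent cl β hs hc hx _).2 rfl,
    fun _ hy => (satOrientation_iff_eq_satParent cl β hs hc hx _).1 hy⟩

theorem outDeg_satOrientation_leaf {w : WV (n + 1) m} (hw : w ∈ wLeaves (n + 1) m) :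
    outDeg F (some w) = 0 :=
  outDeg_eq_zero_iff.2 fun y => by
    cases w <;> simp only [wLeaves, Set.mem_ofPred_eq] at hw <;>
      rcases y with _ | y <;> (try cases y) <;> simp [satOrientation, satArc]

theorem inDeg_satOrientation_c (hβ : ∀ j, ∃! i, i ∈ cl j ∧ β i = true) (j : Fin m) :
    inDeg F (some (.c j)) = 1 := by
  obtain ⟨i, hi, hu⟩ := hβ j
  refine inDeg_eq_one_iff.2 ⟨some (.x i), hi, fun y hy => ?_⟩
  rcases y with _ | y
  · simp [satOrientation] at hy
  · cases y <;> simp_all [satOrientation, satArc]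

theorem satOrientation_funneledDegrees (hβ : ∀ j, ∃! i, i ∈ cl j ∧ β i = true)
    (hocc : ∀ i, ∃ j, i ∈ cl j) (w : WV (n + 1) m) :
    FunneledDegrees F (some '' wLeaves (n + 1) m) (some w) := by
  by_cases hw : w ∈ wLeaves (n + 1) m
  · refine .inl ⟨⟨w, hw, rfl⟩, inDeg_satOrientation_eq_one cl β ?_ ?_ ?_,
      outDeg_satOrientation_leaf cl β hw⟩ <;> cases w <;> simp_all [wLeaves]
  replace hw : some w ∉ some '' wLeaves (n + 1) m := by simpa using hw
  have tree (a b : Option (WV (n + 1) m)) (ha : F (some w) a) (hb : F (some w) b) (hab : a ≠ b)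
      (hp : w ≠ .s ∧ (∀ j, w ≠ .c j) ∧ ∀ i, w = .x i → β i = true) :
      FunneledDegrees F (some '' wLeaves (n + 1) m) (some w) :=
    .inr (.inl ⟨hw, inDeg_satOrientation_eq_one cl β hp.1 hp.2.1 hp.2.2, two_le_outDeg ha hb hab⟩)
  cases w with
  | s =>
    refine .inr (.inr ⟨hw, two_le_inDeg (a := some .u) (b := some .v) trivial trivial (by simp),
      outDeg_eq_one_iff.2 ⟨some (.p (Fin.last n)), rfl, fun y hy => ?_⟩⟩)
    rcases y with _ | y <;> (try cases y) <;>
      simp_all [satOrientation, satArc, Fin.ext_iff, -Fin.val_eq_zero_iff]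
  | u => exact tree (some .s) (some .v) trivial trivial (by simp) (by simp)
  | u' => exact tree (some .s) (some .v') trivial trivial (by simp) (by simp)
  | v => exact tree (some .s) (some (.vl 0)) trivial trivial (by simp) (by simp)
  | v' => exact tree (some .s) (some (.vl' 0)) trivial trivial (by simp) (by simp)
  | p i => exact tree (some (.pl i)) (some (.pl' i)) rfl rfl (by simp) (by simp)
  | x i =>
    obtain ⟨j, hj⟩ := hocc i
    cases hi : β i
    · refine .inr (.inr ⟨hw, two_le_inDeg (a := some (.p i)) (b := some (.c j)) rfl ⟨hj, hi⟩
        (by simp), outDeg_eq_one_iff.2 ⟨some (.xl i), rfl, fun y hy => ?_⟩⟩)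
      rcases y with _ | y <;> (try cases y) <;> simp_all [satOrientation, satArc]
    · exact tree (some (.xl i)) (some (.c j)) rfl ⟨hj, hi⟩ (by simp) (by simp [hi])
  | c j =>
    exact .inr (.inl ⟨hw, inDeg_satOrientation_c cl β hβ j,
      two_le_outDeg (a := some (.cleaf j 0)) (b := some (.cleaf j 1)) rfl rfl (by simp)⟩)
  | _ => simp [wLeaves] at hw

theorem satOrientation_isRootedPhyloNetwork_and_funneled
    (hβ : ∀ j, ∃! i, i ∈ cl j ∧ β i = true) (hocc : ∀ i, ∃ j, i ∈ cl j) :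
    IsRootedPhyloNetwork F none (some '' wLeaves (n + 1) m) ∧ Funneled F := by
  refine isRootedPhyloNetwork_and_funneled_of_degrees (satOrientation_acyclic cl β) ?_
    (le_trans (by norm_num) (two_le_outDeg (a := some .u) (b := some .u') (.inl rfl) (.inr rfl)
      (by simp))) (by simp) ?_
  · rw [inDeg, Set.ncard_eq_zero]
    exact Set.eq_empty_of_forall_notMem fun y hy => (satOrientation_variantA cl β).2.2.2.1 y hy
  · rintro (_ | w) hw
    · exact absurd rfl hw
    · exact satOrientation_funneledDegrees cl β hβ hocc w

end Forward

section Reverse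

variable {n m : ℕ}

def IsCore : WV n m → Prop
  | .s | .u | .u' | .v | .v' => True
  | _ => False

def IsGadget : WV n m → Prop
  | .s | .u | .u' | .v | .v' | .ul _ | .ul' _ | .vl _ | .vl' _ => True
  | _ => False

theorem IsCore.isGadget {g : WV n m} (h : IsCore g) : IsGadget g := by
  cases g <;> simp_all [IsCore, IsGadget]

def IsNearGadget (w : WV (n + 1) m) : Prop := IsGadget w ∨ w = .p (Fin.last n)

def IsAbove (i : Fin (n + 1)) : Option (WV (n + 1) m) → Prop
  | none | some .s => True
  | some (.p j) => i < j
  | _ => False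

variable {cl : Fin m → Finset (Fin (n + 1))}

theorem isNearGadget_of_adj_isCore {g w : WV (n + 1) m} (hg : IsCore g) (h : wAdj cl g w) :
    IsNearGadget w := by
  cases g <;> cases w <;> simp_all [IsCore, IsNearGadget, IsGadget, wAdj, wBase, Fin.ext_iff]

theorem eq_s_of_adj_of_isGadget {w w' : WV (n + 1) m} (hw : IsGadget w) (hw' : ¬ IsGadget w')
    (h : wAdj cl w w') : w = .s ∧ w' = .p (Fin.last n) := by
  cases w <;> cases w' <;> simp_all [IsGadget, wAdj, wBase, Fin.ext_iff]

variable {a b : WV (n + 1) m} {D : Option (WV (n + 1) m) → Option (WV (n + 1) m) → Prop}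

section RootlessGadget

variable (hva : VariantA (wAdj cl) a b D)
  (hN : IsRootedPhyloNetwork D none (some '' wLeaves (n + 1) m)) (hF : Funneled D)
  (ha : ¬ IsCore a) (hb : ¬ IsCore b)

include ha hb in
theorem not_samePair_of_isCore {g w : WV (n + 1) m} (hg : IsCore g) : ¬ SamePair w g a b :=
  fun h => h.eq_or_eq.elim (fun h => ha (h ▸ hg)) fun h => hb (h ▸ hg)

include hva hN hF ha hb in
theorem inDeg_eq_one_of_isCore {g : WV (n + 1) m} (hg : IsCore g) (hs : g ≠ .s) :
    inDeg D (some g) = 1 := by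
  have nsp {w : WV (n + 1) m} : ¬ SamePair g w a b := fun h =>
    not_samePair_of_isCore ha hb hg h.symm
  have leaves := hva.inDeg_eq_one_of_leaves hN hF (u := g)
  cases g <;> simp only [IsCore, ne_eq, not_true_eq_false] at hg hs
  · exact leaves (.ul 0) (.ul 1) trivial trivial (by simp) (.inl trivial) (.inl trivial) nsp nsp
  · exact leaves (.ul' 0) (.ul' 1) trivial trivial (by simp) (.inl trivial) (.inl trivial) nsp nsp
  · exact leaves (.vl 0) (.vl 1) trivial trivial (by simp) (.inl trivial) (.inl trivial) nsp nsp
  · exact leaves (.vl' 0) (.vl' 1) trivial trivial (by simp) (.inl trivial) (.inl trivial) nsp nsp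

include hva hN hF ha hb in
theorem arc_of_parent_isCore {g w : WV (n + 1) m} (hg : IsCore g) (hs : g ≠ .s)
    {z : Option (WV (n + 1) m)} (hz : D z (some g)) (hzw : z ≠ some w) (hadj : wAdj cl g w) :
    D (some g) (some w) :=
  hva.arc_of_inDeg_eq_one (inDeg_eq_one_of_isCore hva hN hF ha hb hg hs) hz hzw hadj
    fun h => not_samePair_of_isCore ha hb hg h.symm

include hva hN ha hb in
theorem exists_parent_of_isCore {g : WV (n + 1) m} (hg : IsCore g) :
    ∃ w, D (some w) (some g) ∧ wAdj cl w g ∧ w ∉ wLeaves (n + 1) m := by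
  obtain ⟨_ | w, hz⟩ := hN.exists_arc_to (v := some g) (by simp)
  · rcases hva.2.2.2.2.1 g hz with rfl | rfl <;> contradiction
  · exact ⟨w, hz, hva.adj_of_arc hz, fun hw => hN.not_arc_of_mem ⟨w, hw, rfl⟩ _ hz⟩

include hva hN hF ha hb in
theorem not_arc_s_of_isCore {g : WV (n + 1) m} (hg : IsCore g) (hs : g ≠ .s) :
    ¬ D (some .s) (some g) := by
  intro hsg
  have cycle {x y : WV (n + 1) m} (h₁ : D (some .s) (some x)) (h₂ : D (some x) (some y))
      (h₃ : D (some y) (some .s)) : False := hN.1 _ (.head h₁ (.head h₂ (.single h₃)))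
  have tree {g w : WV (n + 1) m} {z} (hg : IsCore g) (hz : D z (some g)) (hzw : z ≠ some w)
      (hadj : wAdj cl g w) (hs : g ≠ .s := by simp) : D (some g) (some w) :=
    arc_of_parent_isCore hva hN hF ha hb hg hs hz hzw hadj
  cases g <;> simp only [IsCore, ne_eq, not_true_eq_false] at hg hs
  · have huu' := tree (g := .u) (w := .u') trivial hsg (by simp) (.inl trivial)
    exact cycle hsg huu' (tree trivial huu' (by simp) (.inr trivial))
  · have hu'u := tree (g := .u') (w := .u) trivial hsg (by simp) (.inr trivial)
    exact cycle hsg hu'u (tree trivial hu'u (by simp) (.inr trivial))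
  · have hvu := tree (g := .v) (w := .u) trivial hsg (by simp) (.inr trivial)
    exact cycle hsg hvu (tree trivial hvu (by simp) (.inr trivial))
  · have hv'u' := tree (g := .v') (w := .u') trivial hsg (by simp) (.inr trivial)
    exact cycle hsg hv'u' (tree trivial hv'u' (by simp) (.inr trivial))

end RootlessGadget

variable (hva : VariantA (wAdj cl) a b D)
  (hN : IsRootedPhyloNetwork D none (some '' wLeaves (n + 1) m)) (hF : Funneled D)

include hva hN hF

theorem isCore_or_isCore : IsCore a ∨ IsCore b := by
  by_contra! h
  obtain ⟨ha, hb⟩ := h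
  have into_s {g : WV (n + 1) m} (hg : IsCore g) (hs : g ≠ .s) : D (some g) (some .s) :=
    (hva.arc_or_arc (u := .s) (by cases g <;> simp_all [IsCore, wAdj, wBase])
      (not_samePair_of_isCore ha hb hg)).resolve_left (not_arc_s_of_isCore hva hN hF ha hb hg hs)
  have parent {g : WV (n + 1) m} (hg : IsCore g) := exists_parent_of_isCore hva hN ha hb hg
  have huv : D (some .u) (some .v) := by
    obtain ⟨w, hw, hadj, hl⟩ := parent (g := .v) trivial
    cases w <;> simp [wAdj, wBase, wLeaves] at hadj hl
    exacts [absurd hw (hva.not_arc_of_arc (into_s trivial (by simp))), hw]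
  have hu'v' : D (some .u') (some .v') := by
    obtain ⟨w, hw, hadj, hl⟩ := parent (g := .v') trivial
    cases w <;> simp [wAdj, wBase, wLeaves] at hadj hl
    exacts [absurd hw (hva.not_arc_of_arc (into_s trivial (by simp))), hw]
  have hu'u : D (some .u') (some .u) := by
    obtain ⟨w, hw, hadj, hl⟩ := parent (g := .u) trivial
    cases w <;> simp [wAdj, wBase, wLeaves] at hadj hl
    exacts [absurd hw (hva.not_arc_of_arc (into_s trivial (by simp))), hw,
      absurd hw (hva.not_arc_of_arc huv)]
  obtain ⟨w, hw, hadj, hl⟩ := parent (g := .u') trivial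
  cases w <;> simp [wAdj, wBase, wLeaves] at hadj hl
  exacts [hva.not_arc_of_arc (into_s (g := .u') trivial (by simp)) hw, hva.not_arc_of_arc hu'u hw,
    hva.not_arc_of_arc hu'v' hw]

theorem isNearGadget_of_root_arc {w : WV (n + 1) m} (h : D none (some w)) : IsNearGadget w := by
  rcases isCore_or_isCore hva hN hF with hc | hc <;> rcases hva.2.2.2.2.1 w h with rfl | rfl
  exacts [.inl hc.isGadget, isNearGadget_of_adj_isCore hc hva.1,
    isNearGadget_of_adj_isCore hc (Or.symm hva.1), .inl hc.isGadget]

theorem not_samePair_of_not_isNearGadget {w w' : WV (n + 1) m} (hw' : ¬ IsNearGadget w') :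
    ¬ SamePair w w' a b := fun h =>
  hw' (isNearGadget_of_root_arc hva hN hF (h.eq_or_eq.elim (· ▸ hva.2.1) (· ▸ hva.2.2.1)))

/-- The top of the caterpillar is reachable from the root, and the only arcs leaving the gadget
side are root arcs and the arc `s → p (last n)`. -/
theorem exists_arc_to_p_last :
    ∃ z, D z (some (.p (Fin.last n))) ∧ (z = none ∨ z = some .s) := by
  let S : Set (Option (WV (n + 1) m)) := {z | ∀ w, z = some w → IsGadget w}
  obtain ⟨y, hy, _ | w, hw, hyw⟩ :=
    (hN.reflTransGen_root (some (.p (Fin.last n)))).exists_arc_leaving (S := S) (by simp [S])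
      (by simp [S, IsGadget])
  · exact absurd (fun w h => nomatch h) hw
  have hw' : ¬ IsGadget w := by simpa [S] using hw
  rcases y with _ | y
  · obtain rfl : w = .p (Fin.last n) := (isNearGadget_of_root_arc hva hN hF hyw).resolve_left hw'
    exact ⟨none, hyw, .inl rfl⟩
  · obtain ⟨rfl, rfl⟩ := eq_s_of_adj_of_isGadget (hy y rfl) hw' (hva.adj_of_arc hyw)
    exact ⟨some .s, hyw, .inr rfl⟩

theorem inDeg_p_eq_one (i : Fin (n + 1)) : inDeg D (some (.p i)) = 1 :=
  hva.inDeg_eq_one_of_leaves hN hF (.pl i) (.pl' i) trivial trivial (by simp) (.inl rfl) (.inl rfl)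
    (not_samePair_of_not_isNearGadget hva hN hF (by simp [IsNearGadget, IsGadget]))
    (not_samePair_of_not_isNearGadget hva hN hF (by simp [IsNearGadget, IsGadget]))

theorem exists_parent_isAbove (i : Fin (n + 1)) : ∃ z, D z (some (.p i)) ∧ IsAbove i z := by
  induction i using Fin.reverseInduction with
  | last =>
    obtain ⟨z, hz, rfl | rfl⟩ := exists_arc_to_p_last hva hN hF
    exacts [⟨_, hz, trivial⟩, ⟨_, hz, trivial⟩]
  | cast i ih =>
    obtain ⟨z, hz, hzi⟩ := ih
    refine ⟨some (.p i.succ), hva.arc_of_inDeg_eq_one (inDeg_p_eq_one hva hN hF i.succ) hz ?_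
      (.inr (by simp [wBase])) (not_samePair_of_not_isNearGadget hva hN hF ?_),
      Fin.castSucc_lt_succ⟩
    · rintro rfl
      exact Fin.castSucc_lt_succ.not_gt hzi
    · simp [IsNearGadget, IsGadget, Fin.castSucc_ne_last]

theorem arc_p_x (i : Fin (n + 1)) : D (some (.p i)) (some (.x i)) := by
  obtain ⟨z, hz, hzi⟩ := exists_parent_isAbove hva hN hF i
  exact hva.arc_of_inDeg_eq_one (inDeg_p_eq_one hva hN hF i) hz (by rintro rfl; exact hzi)
    (.inl rfl) (not_samePair_of_not_isNearGadget hva hN hF (by simp [IsNearGadget, IsGadget]))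

theorem inDeg_c_eq_one (j : Fin m) : inDeg D (some (.c j)) = 1 :=
  hva.inDeg_eq_one_of_leaves hN hF (.cleaf j 0) (.cleaf j 1) trivial trivial (by simp) (.inl rfl)
    (.inl rfl) (not_samePair_of_not_isNearGadget hva hN hF (by simp [IsNearGadget, IsGadget]))
    (not_samePair_of_not_isNearGadget hva hN hF (by simp [IsNearGadget, IsGadget]))

theorem exists_arc_x_c (j : Fin m) : ∃ i ∈ cl j, D (some (.x i)) (some (.c j)) := by
  obtain ⟨_ | w, hz⟩ := hN.exists_arc_to (v := some (.c j)) (by simp)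
  · exact absurd (isNearGadget_of_root_arc hva hN hF hz) (by simp [IsNearGadget, IsGadget])
  have hadj := hva.adj_of_arc hz
  cases w <;> simp [wAdj, wBase] at hadj
  · exact ⟨_, hadj, hz⟩
  · exact absurd hz (hN.not_arc_of_mem ⟨.cleaf _ _, trivial, rfl⟩ _)

theorem arc_x_c_of_arc_x_c {i : Fin (n + 1)} {j j' : Fin m} (h : D (some (.x i)) (some (.c j)))
    (hj' : i ∈ cl j') : D (some (.x i)) (some (.c j')) := by
  have hxl : D (some (.x i)) (some (.xl i)) := hva.arc_to_leaf hN trivial (.inl rfl)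
    (not_samePair_of_not_isNearGadget hva hN hF (by simp [IsNearGadget, IsGadget]))
  exact hva.arc_of_inDeg_eq_one (hN.inDeg_eq_one_of_arcs hF (by simp) h hxl (by simp))
    (arc_p_x hva hN hF i) (by simp) (.inl hj')
    (not_samePair_of_not_isNearGadget hva hN hF (by simp [IsNearGadget, IsGadget]))

theorem exists_oneInThree_assignment :
    ∃ β : Fin (n + 1) → Bool, ∀ j, ∃! i, i ∈ cl j ∧ β i = true := by
  classical
  refine ⟨fun i => decide (∃ j, D (some (.x i)) (some (.c j))), fun j => ?_⟩
  obtain ⟨i, hi, hij⟩ := exists_arc_x_c hva hN hF j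
  refine ⟨i, ⟨hi, decide_eq_true ⟨j, hij⟩⟩, fun i' ⟨hi', hβ⟩ => ?_⟩
  obtain ⟨j', hj'⟩ := of_decide_eq_true hβ
  simpa using (inDeg_eq_one_iff.1 (inDeg_c_eq_one hva hN hF j)).unique
    (arc_x_c_of_arc_x_c hva hN hF hj' hi') hij

end Reverse

theorem one_in_three_sat_iff_funneled_CA_orientation_general
    (n m : ℕ) (hn : 1 ≤ n) (cl : Fin m → Finset (Fin n))
    (hcnt : ∀ i, (Finset.univ.filter fun j => i ∈ cl j).card = 3) :
    (∃ β : Fin n → Bool,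
        ∀ j : Fin m, ∃! i : Fin n, i ∈ cl j ∧ β i = true) ↔
    (∃ (a b : WV n m) (D : Option (WV n m) → Option (WV n m) → Prop),
        VariantA (wAdj cl) a b D ∧
        IsRootedPhyloNetwork D none (Option.some '' wLeaves n m) ∧
        Funneled D) := by
  obtain ⟨n, rfl⟩ : ∃ k, n = k + 1 := ⟨n - 1, by omega⟩
  constructor
  · rintro ⟨β, hβ⟩
    have hocc (i : Fin (n + 1)) : ∃ j, i ∈ cl j := by
      obtain ⟨j, hj⟩ := Finset.card_pos.1 (hcnt i ▸ three_pos)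
      exact ⟨j, (Finset.mem_filter.1 hj).2⟩
    exact ⟨.u, .u', satOrientation cl β, satOrientation_variantA cl β,
      satOrientation_isRootedPhyloNetwork_and_funneled cl β hβ hocc⟩
  · rintro ⟨a, b, D, hva, hN, hF⟩
    exact exists_oneInThree_assignment hva hN hF

/-- Claim in Theorem `hardness_exactly_5`: an instance of
Positive 1-in-3 SAT (clauses of size 3, each variable in exactly three
clauses) has a truth assignment setting exactly one variable of each clause to
true iff the constructed unrooted phylogenetic network `U` (all of whose
non-leaf vertices have degree 5) has a funneled `C_A`-orientation, where `C`
is the class of rooted phylogenetic networks. -/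
theorem one_in_three_sat_iff_funneled_CA_orientation
    (n m : ℕ) (hn : 1 ≤ n) (cl : Fin m → Finset (Fin n))
    (hsize : ∀ j, (cl j).card = 3)
    (hcnt : ∀ i, (Finset.univ.filter fun j => i ∈ cl j).card = 3) :
    (∃ β : Fin n → Bool,
        ∀ j : Fin m, ∃! i : Fin n, i ∈ cl j ∧ β i = true) ↔
    (∃ (a b : WV n m) (D : Option (WV n m) → Option (WV n m) → Prop),
        VariantA (wAdj cl) a b D ∧
        IsRootedPhyloNetwork D none (Option.some '' wLeaves n m) ∧
        Funneled D) :=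
  one_in_three_sat_iff_funneled_CA_orientation_general n m hn cl hcnt

end PaperFormalization
end

section
/- Let C be the class of rooted phylogenetic networks and let C' be the class of tree-child rooted phylogenetic networks. Let U be an unrooted phylogenetic network constructed from an instance of Positive 1-in-3 SAT (with each variable appearing in exactly three clauses) via the caterpillar gadget and the degree-5 root gadget. Then, for each R ∈ {A,B}, U has a funneled C_R-orientation if and only if U has a funneled C'_R-orientation. -/
namespace PaperFormalization

/-! ### Auxiliary infrastructure for the proof -/

section DegreeLemmas

universe u
variable {V : Type u} [Finite V] {D : V → V → Prop}

lemma two_le_inDeg' {w a b : V} (ha : D a w) (hb : D b w) (h : a ≠ b) :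
    2 ≤ inDeg D w := by
  have hsub : ({a, b} : Set V) ⊆ {z | D z w} := by
    intro z hz
    rcases hz with rfl | hz
    · exact ha
    · rcases hz with rfl; exact hb
  calc 2 = ({a, b} : Set V).ncard := (Set.ncard_pair h).symm
    _ ≤ _ := Set.ncard_le_ncard hsub (Set.toFinite _)

lemma two_le_outDeg' {w a b : V} (ha : D w a) (hb : D w b) (h : a ≠ b) :
    2 ≤ outDeg D w := by
  have hsub : ({a, b} : Set V) ⊆ {z | D w z} := by
    intro z hz
    rcases hz with rfl | hz
    · exact ha
    · rcases hz with rfl; exact hb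
  calc 2 = ({a, b} : Set V).ncard := (Set.ncard_pair h).symm
    _ ≤ _ := Set.ncard_le_ncard hsub (Set.toFinite _)

lemma inDeg_eq_zero_iff' {w : V} : inDeg D w = 0 ↔ ∀ a, ¬ D a w := by
  rw [inDeg, Set.ncard_eq_zero (Set.toFinite _), Set.eq_empty_iff_forall_notMem]
  rfl

lemma outDeg_eq_zero_iff' {w : V} : outDeg D w = 0 ↔ ∀ a, ¬ D w a := by
  rw [outDeg, Set.ncard_eq_zero (Set.toFinite _), Set.eq_empty_iff_forall_notMem]
  rfl

lemma outDeg_one_unique {w y z : V} (h : outDeg D w = 1) (hy : D w y) (hz : D w z) :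
    y = z := by
  by_contra hne
  have := two_le_outDeg' hy hz hne
  omega

lemma exists_in_of_inDeg_ne_zero {w : V} (h : inDeg D w ≠ 0) : ∃ a, D a w := by
  by_contra hc
  push_neg at hc
  exact h (inDeg_eq_zero_iff'.mpr hc)

end DegreeLemmas
instance {n m : ℕ} : Finite (WV n m) := by
  let f : (Fin 5 ⊕ Fin 2 ⊕ Fin 2 ⊕ Fin 3 ⊕ Fin 3) ⊕
      (Fin n ⊕ Fin n ⊕ Fin n ⊕ Unit ⊕ Fin n ⊕ Fin n) ⊕ (Fin m ⊕ Fin m × Fin 2) →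
      WV n m := fun z =>
    match z with
    | .inl (.inl a) => [WV.s, WV.u, WV.u', WV.v, WV.v'].get (a.cast (by simp))
    | .inl (.inr (.inl k)) => WV.ul k
    | .inl (.inr (.inr (.inl k))) => WV.ul' k
    | .inl (.inr (.inr (.inr (.inl k)))) => WV.vl k
    | .inl (.inr (.inr (.inr (.inr k)))) => WV.vl' k
    | .inr (.inl (.inl i)) => WV.p i
    | .inr (.inl (.inr (.inl i))) => WV.pl i
    | .inr (.inl (.inr (.inr (.inl i)))) => WV.pl' i
    | .inr (.inl (.inr (.inr (.inr (.inl _))))) => WV.pl0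
    | .inr (.inl (.inr (.inr (.inr (.inr (.inl i)))))) => WV.x i
    | .inr (.inl (.inr (.inr (.inr (.inr (.inr i)))))) => WV.xl i
    | .inr (.inr (.inl j)) => WV.c j
    | .inr (.inr (.inr (j, k))) => WV.cleaf j k
  apply Finite.of_surjective f
  intro w
  cases w with
  | s => exact ⟨.inl (.inl 0), rfl⟩
  | u => exact ⟨.inl (.inl 1), rfl⟩
  | u' => exact ⟨.inl (.inl 2), rfl⟩
  | v => exact ⟨.inl (.inl 3), rfl⟩
  | v' => exact ⟨.inl (.inl 4), rfl⟩
  | ul k => exact ⟨.inl (.inr (.inl k)), rfl⟩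
  | ul' k => exact ⟨.inl (.inr (.inr (.inl k))), rfl⟩
  | vl k => exact ⟨.inl (.inr (.inr (.inr (.inl k)))), rfl⟩
  | vl' k => exact ⟨.inl (.inr (.inr (.inr (.inr k)))), rfl⟩
  | p i => exact ⟨.inr (.inl (.inl i)), rfl⟩
  | pl i => exact ⟨.inr (.inl (.inr (.inl i))), rfl⟩
  | pl' i => exact ⟨.inr (.inl (.inr (.inr (.inl i)))), rfl⟩
  | pl0 => exact ⟨.inr (.inl (.inr (.inr (.inr (.inl ()))))), rfl⟩
  | x i => exact ⟨.inr (.inl (.inr (.inr (.inr (.inr (.inl i)))))), rfl⟩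
  | xl i => exact ⟨.inr (.inl (.inr (.inr (.inr (.inr (.inr i)))))), rfl⟩
  | c j => exact ⟨.inr (.inr (.inl j)), rfl⟩
  | cleaf j k => exact ⟨.inr (.inr (.inr (j, k))), rfl⟩

section Graph

variable {n m : ℕ} {cl : Fin m → Finset (Fin n)}

/-- Leaf membership facts. -/
lemma leaf_ul (k : Fin 2) : (WV.ul k : WV n m) ∈ wLeaves n m := trivial
lemma leaf_ul' (k : Fin 2) : (WV.ul' k : WV n m) ∈ wLeaves n m := trivial
lemma leaf_vl (k : Fin 3) : (WV.vl k : WV n m) ∈ wLeaves n m := trivial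
lemma leaf_vl' (k : Fin 3) : (WV.vl' k : WV n m) ∈ wLeaves n m := trivial
lemma leaf_pl (i : Fin n) : (WV.pl i : WV n m) ∈ wLeaves n m := trivial
lemma leaf_pl' (i : Fin n) : (WV.pl' i : WV n m) ∈ wLeaves n m := trivial
lemma leaf_pl0 : (WV.pl0 : WV n m) ∈ wLeaves n m := trivial
lemma leaf_xl (i : Fin n) : (WV.xl i : WV n m) ∈ wLeaves n m := trivial
lemma leaf_cleaf (j : Fin m) (k : Fin 2) : (WV.cleaf j k : WV n m) ∈ wLeaves n m := trivial

lemma not_leaf_s : (WV.s : WV n m) ∉ wLeaves n m := fun h => h.elim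
lemma not_leaf_u : (WV.u : WV n m) ∉ wLeaves n m := fun h => h.elim
lemma not_leaf_u' : (WV.u' : WV n m) ∉ wLeaves n m := fun h => h.elim
lemma not_leaf_v : (WV.v : WV n m) ∉ wLeaves n m := fun h => h.elim
lemma not_leaf_v' : (WV.v' : WV n m) ∉ wLeaves n m := fun h => h.elim
lemma not_leaf_p (i : Fin n) : (WV.p i : WV n m) ∉ wLeaves n m := fun h => h.elim
lemma not_leaf_x (i : Fin n) : (WV.x i : WV n m) ∉ wLeaves n m := fun h => h.elim
lemma not_leaf_c (j : Fin m) : (WV.c j : WV n m) ∉ wLeaves n m := fun h => h.elim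

/-- Positive adjacency facts. -/
lemma adj_su : wAdj cl WV.s WV.u := Or.inl trivial
lemma adj_su' : wAdj cl WV.s WV.u' := Or.inl trivial
lemma adj_sv : wAdj cl WV.s WV.v := Or.inl trivial
lemma adj_sv' : wAdj cl WV.s WV.v' := Or.inl trivial
lemma adj_uu' : wAdj cl WV.u WV.u' := Or.inl trivial
lemma adj_uv : wAdj cl WV.u WV.v := Or.inl trivial
lemma adj_u'v' : wAdj cl WV.u' WV.v' := Or.inl trivial
lemma adj_uul (k : Fin 2) : wAdj cl WV.u (WV.ul k) := Or.inl trivial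
lemma adj_u'ul' (k : Fin 2) : wAdj cl WV.u' (WV.ul' k) := Or.inl trivial
lemma adj_vvl (k : Fin 3) : wAdj cl WV.v (WV.vl k) := Or.inl trivial
lemma adj_v'vl' (k : Fin 3) : wAdj cl WV.v' (WV.vl' k) := Or.inl trivial
lemma adj_ppl (i : Fin n) : wAdj cl (WV.p i) (WV.pl i) := Or.inl rfl
lemma adj_ppl' (i : Fin n) : wAdj cl (WV.p i) (WV.pl' i) := Or.inl rfl
lemma adj_ppl0 (i : Fin n) (h : (i : ℕ) = 0) : wAdj cl (WV.p i) WV.pl0 := Or.inl h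
lemma adj_xxl (i : Fin n) : wAdj cl (WV.x i) (WV.xl i) := Or.inl rfl
lemma adj_ccleaf (j : Fin m) (k : Fin 2) : wAdj cl (WV.c j) (WV.cleaf j k) := Or.inl rfl

/-- Neighbour characterisations. -/
lemma mem_nbr_u {a : WV n m} (h : wAdj cl a WV.u) :
    a = WV.s ∨ a = WV.u' ∨ a = WV.v ∨ ∃ k, a = WV.ul k := by
  cases a <;> simp_all [wAdj, wBase]

lemma mem_nbr_u' {a : WV n m} (h : wAdj cl a WV.u') :
    a = WV.s ∨ a = WV.u ∨ a = WV.v' ∨ ∃ k, a = WV.ul' k := by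
  cases a <;> simp_all [wAdj, wBase]

lemma mem_nbr_v {a : WV n m} (h : wAdj cl a WV.v) :
    a = WV.s ∨ a = WV.u ∨ ∃ k, a = WV.vl k := by
  cases a <;> simp_all [wAdj, wBase]

lemma mem_nbr_v' {a : WV n m} (h : wAdj cl a WV.v') :
    a = WV.s ∨ a = WV.u' ∨ ∃ k, a = WV.vl' k := by
  cases a <;> simp_all [wAdj, wBase]

lemma mem_nbr_s {a : WV n m} (h : wAdj cl a WV.s) :
    a = WV.u ∨ a = WV.u' ∨ a = WV.v ∨ a = WV.v' ∨ ∃ i, a = WV.p i := by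
  cases a <;> simp_all [wAdj, wBase]

lemma mem_nbr_x {i : Fin n} {a : WV n m} (h : wAdj cl a (WV.x i)) :
    a = WV.p i ∨ a = WV.xl i ∨ ∃ j, a = WV.c j := by
  cases a <;> simp_all [wAdj, wBase]

lemma adj_irrefl {a : WV n m} : ¬ wAdj cl a a := by
  cases a <;> simp [wAdj, wBase] <;> omega

end Graph
/-! ### Variant B context -/

/-- All hypotheses of a funneled Variant-B orientation, bundled. -/
structure CtxB (n m : ℕ) (cl : Fin m → Finset (Fin n)) where
  D : WV n m → WV n m → Prop
  ρ : WV n m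
  orient : IsOrientation (wAdj cl) D
  phylo : IsRootedPhyloNetwork D ρ (wLeaves n m \ {ρ})
  funl : Funneled D

namespace CtxB

variable {n m : ℕ} {cl : Fin m → Finset (Fin n)} (C : CtxB n m cl)

lemma acy : Acyclic C.D := C.phylo.1
lemma rootin : inDeg C.D C.ρ = 0 := C.phylo.2.2.1
lemma uniq {w : WV n m} (h : inDeg C.D w = 0) : w = C.ρ := C.phylo.2.2.2.2.1 w h
lemma leafset : {v | outDeg C.D v = 0} = wLeaves n m \ {C.ρ} := C.phylo.2.2.2.2.2.2.1
lemma internal {w : WV n m} (h1 : w ≠ C.ρ) (h2 : outDeg C.D w ≠ 0) :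
    (inDeg C.D w = 1 ∧ 2 ≤ outDeg C.D w) ∨ (2 ≤ inDeg C.D w ∧ 1 ≤ outDeg C.D w) :=
  C.phylo.2.2.2.2.2.2.2 w h1 h2

lemma arc_adj {a b : WV n m} (h : C.D a b) : wAdj cl a b := C.orient.1 a b h
lemma not_rev {a b : WV n m} (h : C.D a b) : ¬ C.D b a :=
  (C.orient.2 a b (C.arc_adj h)).1 h
lemma tot {a b : WV n m} (h : wAdj cl a b) (h' : ¬ C.D b a) : C.D a b := by
  have := C.orient.2 b a (Or.symm h)
  by_contra hc
  exact h' (by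
    by_contra hc2
    exact hc ((C.orient.2 a b h).2 hc2))
lemma tot_or {a b : WV n m} (h : wAdj cl a b) : C.D a b ∨ C.D b a := by
  by_cases hb : C.D b a
  · exact Or.inr hb
  · exact Or.inl (C.tot h hb)

lemma not_to_root {a : WV n m} : ¬ C.D a C.ρ := inDeg_eq_zero_iff'.1 C.rootin a

lemma leaf_outdeg {ℓ : WV n m} (h : ℓ ∈ wLeaves n m) (h2 : ℓ ≠ C.ρ) :
    outDeg C.D ℓ = 0 := by
  have : ℓ ∈ wLeaves n m \ {C.ρ} := ⟨h, h2⟩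
  rw [← C.leafset] at this
  exact this

lemma sink {ℓ y : WV n m} (h : ℓ ∈ wLeaves n m) (h2 : ℓ ≠ C.ρ) : ¬ C.D ℓ y :=
  outDeg_eq_zero_iff'.1 (C.leaf_outdeg h h2) y

lemma to_leaf {w ℓ : WV n m} (hadj : wAdj cl w ℓ) (h : ℓ ∈ wLeaves n m)
    (h2 : ℓ ≠ C.ρ) : C.D w ℓ := C.tot hadj (C.sink h h2)

lemma out_ne_zero {w : WV n m} (h : w ∉ wLeaves n m) : outDeg C.D w ≠ 0 := by
  intro h0
  have : w ∈ wLeaves n m \ {C.ρ} := by rw [← C.leafset]; exact h0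
  exact h this.1

lemma exists_out {w : WV n m} (h : w ∉ wLeaves n m) : ∃ y, C.D w y := by
  by_contra hc
  push_neg at hc
  exact C.out_ne_zero h (outDeg_eq_zero_iff'.2 hc)

lemma exists_in {w : WV n m} (h : w ≠ C.ρ) : ∃ a, C.D a w := by
  apply exists_in_of_inDeg_ne_zero
  intro h0
  exact h (C.uniq h0)

lemma tree_of {w : WV n m} (hnl : w ∉ wLeaves n m) (hρ : w ≠ C.ρ)
    (h : ¬ 2 ≤ inDeg C.D w) : IsTreeVertex C.D w := by
  rcases C.internal hρ (C.out_ne_zero hnl) with ⟨h1, h2⟩ | ⟨h1, _⟩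
  · exact ⟨h1, by omega⟩
  · exact absurd h1 h

lemma child_ne_root {a b : WV n m} (h : C.D a b) : b ≠ C.ρ :=
  fun hb => C.not_to_root (hb ▸ h)

/-- A vertex with two pendant leaves, neither of which is the root, is not
a reticulation. -/
lemma noRet_two_pendants {w ℓ1 ℓ2 : WV n m} (hne : ℓ1 ≠ ℓ2)
    (ha1 : wAdj cl w ℓ1) (ha2 : wAdj cl w ℓ2)
    (hl1 : ℓ1 ∈ wLeaves n m) (hl2 : ℓ2 ∈ wLeaves n m)
    (hρ1 : ℓ1 ≠ C.ρ) (hρ2 : ℓ2 ≠ C.ρ) : ¬ 2 ≤ inDeg C.D w := by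
  intro h2
  have hout := C.funl w h2
  have d1 := C.to_leaf ha1 hl1 hρ1
  have d2 := C.to_leaf ha2 hl2 hρ2
  have := two_le_outDeg' d1 d2 hne
  omega

/-- `v` is never a reticulation. -/
lemma noRetV : ¬ 2 ≤ inDeg C.D (WV.v : WV n m) := by
  by_cases h0 : (WV.vl 0 : WV n m) = C.ρ
  · exact C.noRet_two_pendants (by simp) (adj_vvl 1) (adj_vvl 2) (leaf_vl 1) (leaf_vl 2)
      (by rw [← h0]; simp) (by rw [← h0]; simp)
  · by_cases h1 : (WV.vl 1 : WV n m) = C.ρ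
    · exact C.noRet_two_pendants (by simp) (adj_vvl 0) (adj_vvl 2) (leaf_vl 0) (leaf_vl 2)
        (by rw [← h1]; simp) (by rw [← h1]; simp)
    · exact C.noRet_two_pendants (by simp) (adj_vvl 0) (adj_vvl 1) (leaf_vl 0) (leaf_vl 1)
        h0 h1

/-- `v'` is never a reticulation. -/
lemma noRetV' : ¬ 2 ≤ inDeg C.D (WV.v' : WV n m) := by
  by_cases h0 : (WV.vl' 0 : WV n m) = C.ρ
  · exact C.noRet_two_pendants (by simp) (adj_v'vl' 1) (adj_v'vl' 2) (leaf_vl' 1) (leaf_vl' 2)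
      (by rw [← h0]; simp) (by rw [← h0]; simp)
  · by_cases h1 : (WV.vl' 1 : WV n m) = C.ρ
    · exact C.noRet_two_pendants (by simp) (adj_v'vl' 0) (adj_v'vl' 2) (leaf_vl' 0) (leaf_vl' 2)
        (by rw [← h1]; simp) (by rw [← h1]; simp)
    · exact C.noRet_two_pendants (by simp) (adj_v'vl' 0) (adj_v'vl' 1) (leaf_vl' 0) (leaf_vl' 1)
        h0 h1

end CtxB
namespace CtxB

variable {n m : ℕ} {cl : Fin m → Finset (Fin n)} (C : CtxB n m cl)



/-- `u` is never a reticulation. -/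
lemma noRetU : ¬ 2 ≤ inDeg C.D (WV.u : WV n m) := by
  intro h2
  have hout := C.funl _ h2
  have hρ : C.ρ = WV.ul 0 ∨ C.ρ = WV.ul 1 := by
    by_contra hcon
    push_neg at hcon
    exact C.noRet_two_pendants (by simp) (adj_uul 0) (adj_uul 1) (leaf_ul 0) (leaf_ul 1)
      (Ne.symm hcon.1) (Ne.symm hcon.2) h2
  have hvlρ : ∀ k : Fin 3, (WV.vl k : WV n m) ≠ C.ρ := by
    rcases hρ with h | h <;> simp [h]
  have hvl'ρ : ∀ k : Fin 3, (WV.vl' k : WV n m) ≠ C.ρ := by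
    rcases hρ with h | h <;> simp [h]
  have hul'ρ : ∀ k : Fin 2, (WV.ul' k : WV n m) ≠ C.ρ := by
    rcases hρ with h | h <;> simp [h]
  have hvρ : (WV.v : WV n m) ≠ C.ρ := by rcases hρ with h | h <;> simp [h]
  -- the unique out-arc of u goes to a pendant leaf
  obtain ⟨kk, hkk⟩ : ∃ ko : Fin 2, C.D WV.u (WV.ul ko) := by
    rcases hρ with h | h
    · exact ⟨1, C.to_leaf (adj_uul 1) (leaf_ul 1) (by simp [h])⟩
    · exact ⟨0, C.to_leaf (adj_uul 0) (leaf_ul 0) (by simp [h])⟩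
  have huniq : ∀ y, C.D WV.u y → y = WV.ul kk := fun y hy =>
    outDeg_one_unique hout hy hkk
  -- forced in-arcs of u
  have dsu : C.D WV.s WV.u := C.tot adj_su (fun h => by have := huniq _ h; simp at this)
  have du'u : C.D WV.u' WV.u :=
    C.tot (Or.symm (adj_uu' (cl := cl))) (fun h => by have := huniq _ h; simp at this)
  have dvu : C.D WV.v WV.u :=
    C.tot (Or.symm (adj_uv (cl := cl))) (fun h => by have := huniq _ h; simp at this)
  -- v's only possible in-neighbour is s
  have hv_in : ∀ z, C.D z WV.v → z = WV.s := by
    intro z hz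
    rcases mem_nbr_v (C.arc_adj hz) with rfl | rfl | ⟨k, rfl⟩
    · rfl
    · exact absurd hz (C.not_rev dvu)
    · exact absurd hz (C.sink (leaf_vl k) (hvlρ k))
  -- u' has out-arcs to u and a pendant, hence in-degree ≤ 1
  have du'l : C.D WV.u' (WV.ul' 0) := C.to_leaf (adj_u'ul' 0) (leaf_ul' 0) (hul'ρ 0)
  have hu'one : ∀ z1 z2, C.D z1 WV.u' → C.D z2 WV.u' → z1 = z2 := by
    intro z1 z2 h1 h2'
    by_contra hne
    have hin := two_le_inDeg' h1 h2' hne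
    have := outDeg_one_unique (C.funl _ hin) du'u du'l
    simp at this
  -- v' has out-arcs to two pendants, hence in-degree ≤ 1
  have dv'0 : C.D WV.v' (WV.vl' 0) := C.to_leaf (adj_v'vl' 0) (leaf_vl' 0) (hvl'ρ 0)
  have dv'1 : C.D WV.v' (WV.vl' 1) := C.to_leaf (adj_v'vl' 1) (leaf_vl' 1) (hvl'ρ 1)
  have hv'one : ∀ z1 z2, C.D z1 WV.v' → C.D z2 WV.v' → z1 = z2 := by
    intro z1 z2 h1 h2'
    by_contra hne
    have hin := two_le_inDeg' h1 h2' hne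
    have := outDeg_one_unique (C.funl _ hin) dv'0 dv'1
    simp at this
  -- the triangle s, u', v'
  have scontr : C.D WV.u' WV.s → C.D WV.v' WV.s → False := by
    intro du's dv's
    have h2s : 2 ≤ inDeg C.D WV.s := two_le_inDeg' du's dv's (by simp)
    have houts := C.funl _ h2s
    have hnsv : ¬ C.D WV.s WV.v := fun h => by
      have := outDeg_one_unique houts h dsu; simp at this
    have h0 : inDeg C.D WV.v = 0 := inDeg_eq_zero_iff'.2 (fun z hz => by
      have := hv_in z hz; subst this; exact hnsv hz)
    exact hvρ (C.uniq h0)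
  rcases C.tot_or adj_su' with dsu' | du's
  · rcases C.tot_or adj_u'v' with du'v' | dv'u'
    · rcases C.tot_or adj_sv' with dsv' | dv's
      · have := hv'one _ _ dsv' du'v'; simp at this
      · exact C.acy WV.s (Relation.TransGen.head dsu'
          (Relation.TransGen.head du'v' (Relation.TransGen.single dv's)))
    · have := hu'one _ _ dsu' dv'u'; simp at this
  · rcases C.tot_or adj_u'v' with du'v' | dv'u'
    · rcases C.tot_or adj_sv' with dsv' | dv's
      · have := hv'one _ _ dsv' du'v'; simp at this
      · exact scontr du's dv's
    · rcases C.tot_or adj_sv' with dsv' | dv's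
      · exact C.acy WV.s (Relation.TransGen.head dsv'
          (Relation.TransGen.head dv'u' (Relation.TransGen.single du's)))
      · exact scontr du's dv's

/-- `u'` is never a reticulation. -/
lemma noRetU' : ¬ 2 ≤ inDeg C.D (WV.u' : WV n m) := by
  intro h2
  have hout := C.funl _ h2
  have hρ : C.ρ = WV.ul' 0 ∨ C.ρ = WV.ul' 1 := by
    by_contra hcon
    push_neg at hcon
    exact C.noRet_two_pendants (by simp) (adj_u'ul' 0) (adj_u'ul' 1) (leaf_ul' 0) (leaf_ul' 1)
      (Ne.symm hcon.1) (Ne.symm hcon.2) h2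
  have hvlρ : ∀ k : Fin 3, (WV.vl k : WV n m) ≠ C.ρ := by
    rcases hρ with h | h <;> simp [h]
  have hvl'ρ : ∀ k : Fin 3, (WV.vl' k : WV n m) ≠ C.ρ := by
    rcases hρ with h | h <;> simp [h]
  have hulρ : ∀ k : Fin 2, (WV.ul k : WV n m) ≠ C.ρ := by
    rcases hρ with h | h <;> simp [h]
  have hv'ρ : (WV.v' : WV n m) ≠ C.ρ := by rcases hρ with h | h <;> simp [h]
  obtain ⟨kk, hkk⟩ : ∃ ko : Fin 2, C.D WV.u' (WV.ul' ko) := by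
    rcases hρ with h | h
    · exact ⟨1, C.to_leaf (adj_u'ul' 1) (leaf_ul' 1) (by simp [h])⟩
    · exact ⟨0, C.to_leaf (adj_u'ul' 0) (leaf_ul' 0) (by simp [h])⟩
  have huniq : ∀ y, C.D WV.u' y → y = WV.ul' kk := fun y hy =>
    outDeg_one_unique hout hy hkk
  have dsu' : C.D WV.s WV.u' := C.tot adj_su' (fun h => by have := huniq _ h; simp at this)
  have duu' : C.D WV.u WV.u' :=
    C.tot adj_uu' (fun h => by have := huniq _ h; simp at this)
  have dv'u' : C.D WV.v' WV.u' :=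
    C.tot (Or.symm (adj_u'v' (cl := cl))) (fun h => by have := huniq _ h; simp at this)
  have hv'_in : ∀ z, C.D z WV.v' → z = WV.s := by
    intro z hz
    rcases mem_nbr_v' (C.arc_adj hz) with rfl | rfl | ⟨k, rfl⟩
    · rfl
    · exact absurd hz (fun h => by have := huniq _ h; simp at this)
    · exact absurd hz (C.sink (leaf_vl' k) (hvl'ρ k))
  have dul : C.D WV.u (WV.ul 0) := C.to_leaf (adj_uul 0) (leaf_ul 0) (hulρ 0)
  have huone : ∀ z1 z2, C.D z1 WV.u → C.D z2 WV.u → z1 = z2 := by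
    intro z1 z2 h1 h2'
    by_contra hne
    have hin := two_le_inDeg' h1 h2' hne
    have := outDeg_one_unique (C.funl _ hin) duu' dul
    simp at this
  have dv0 : C.D WV.v (WV.vl 0) := C.to_leaf (adj_vvl 0) (leaf_vl 0) (hvlρ 0)
  have dv1 : C.D WV.v (WV.vl 1) := C.to_leaf (adj_vvl 1) (leaf_vl 1) (hvlρ 1)
  have hvone : ∀ z1 z2, C.D z1 WV.v → C.D z2 WV.v → z1 = z2 := by
    intro z1 z2 h1 h2'
    by_contra hne
    have hin := two_le_inDeg' h1 h2' hne
    have := outDeg_one_unique (C.funl _ hin) dv0 dv1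
    simp at this
  have scontr : C.D WV.u WV.s → C.D WV.v WV.s → False := by
    intro dus dvs
    have h2s : 2 ≤ inDeg C.D WV.s := two_le_inDeg' dus dvs (by simp)
    have houts := C.funl _ h2s
    have hnsv' : ¬ C.D WV.s WV.v' := fun h => by
      have := outDeg_one_unique houts h dsu'; simp at this
    have h0 : inDeg C.D WV.v' = 0 := inDeg_eq_zero_iff'.2 (fun z hz => by
      have := hv'_in z hz; subst this; exact hnsv' hz)
    exact hv'ρ (C.uniq h0)
  rcases C.tot_or adj_su with dsu | dus
  · rcases C.tot_or adj_uv with duv | dvu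
    · rcases C.tot_or adj_sv with dsv | dvs
      · have := hvone _ _ dsv duv; simp at this
      · exact C.acy WV.s (Relation.TransGen.head dsu
          (Relation.TransGen.head duv (Relation.TransGen.single dvs)))
    · have := huone _ _ dsu dvu; simp at this
  · rcases C.tot_or adj_uv with duv | dvu
    · rcases C.tot_or adj_sv with dsv | dvs
      · have := hvone _ _ dsv duv; simp at this
      · exact scontr dus dvs
    · rcases C.tot_or adj_sv with dsv | dvs
      · exact C.acy WV.s (Relation.TransGen.head dsv
          (Relation.TransGen.head dvu (Relation.TransGen.single dus)))
      · exact scontr dus dvs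

end CtxB
namespace CtxB

variable {n m : ℕ} {cl : Fin m → Finset (Fin n)} (C : CtxB n m cl)

/-- The root of a Variant-B orientation lies in the root gadget. -/
lemma root_mem : C.ρ = WV.u ∨ C.ρ = WV.u' ∨ C.ρ = WV.v ∨ C.ρ = WV.v' ∨
    (∃ k, C.ρ = WV.ul k) ∨ (∃ k, C.ρ = WV.ul' k) ∨
    (∃ k, C.ρ = WV.vl k) ∨ (∃ k, C.ρ = WV.vl' k) := by
  by_contra hcon
  push_neg at hcon
  obtain ⟨hu, hu', hv, hv', hul, hul', hvl, hvl'⟩ := hcon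
  have hsρ : WV.s ≠ C.ρ := by
    intro h
    have hnsu : ¬ C.D WV.u WV.s := by rw [h]; exact C.not_to_root
    have hnsu' : ¬ C.D WV.u' WV.s := by rw [h]; exact C.not_to_root
    have dsu : C.D WV.s WV.u := C.tot adj_su hnsu
    have dsu' : C.D WV.s WV.u' := C.tot adj_su' hnsu'
    rcases C.tot_or adj_uu' with h1 | h1
    · exact C.noRetU' (two_le_inDeg' dsu' h1 (by simp))
    · exact C.noRetU (two_le_inDeg' dsu h1 (by simp))
  rcases C.internal hsρ (C.out_ne_zero not_leaf_s) with ⟨hin1, _⟩ | ⟨hin2, _⟩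
  · -- s would be a tree vertex
    obtain ⟨w0, hw0⟩ := exists_in_of_inDeg_ne_zero
      (show inDeg C.D WV.s ≠ 0 by omega)
    have hinuq : ∀ z, C.D z WV.s → z = w0 := by
      intro z hz
      by_contra hne
      have := two_le_inDeg' hz hw0 hne
      omega
    have hsout : ∀ y, wAdj cl WV.s y → y ≠ w0 → C.D WV.s y := fun y ha hne =>
      C.tot ha (fun h => hne (hinuq _ h))
    rcases mem_nbr_s (C.arc_adj hw0) with rfl | rfl | rfl | rfl | ⟨i, rfl⟩
    · have dsu' := hsout _ adj_su' (by simp)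
      have dsv' := hsout _ adj_sv' (by simp)
      rcases C.tot_or adj_u'v' with h1 | h1
      · exact C.noRetV' (two_le_inDeg' dsv' h1 (by simp))
      · exact C.noRetU' (two_le_inDeg' dsu' h1 (by simp))
    · have dsu := hsout _ adj_su (by simp)
      have dsv := hsout _ adj_sv (by simp)
      rcases C.tot_or adj_uv with h1 | h1
      · exact C.noRetV (two_le_inDeg' dsv h1 (by simp))
      · exact C.noRetU (two_le_inDeg' dsu h1 (by simp))
    all_goals {
      have dsu := hsout _ adj_su (by simp)
      have dsu' := hsout _ adj_su' (by simp)
      rcases C.tot_or adj_uu' with h1 | h1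
      · exact C.noRetU' (two_le_inDeg' dsu' h1 (by simp))
      · exact C.noRetU (two_le_inDeg' dsu h1 (by simp)) }
  · -- s is a reticulation
    have houts := C.funl _ hin2
    obtain ⟨z, hz⟩ := C.exists_out not_leaf_s
    have houtuq : ∀ y, C.D WV.s y → y = z := fun y hy => outDeg_one_unique houts hy hz
    have hsin : ∀ y, wAdj cl y WV.s → y ≠ z → C.D y WV.s := fun y ha hne =>
      C.tot ha (fun h => hne (houtuq _ h))
    rcases mem_nbr_s (Or.symm (C.arc_adj hz)) with rfl | rfl | rfl | rfl | ⟨i, rfl⟩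
    · -- z = u
      have du's := hsin _ (Or.symm adj_su') (by simp)
      have duu' : C.D WV.u WV.u' :=
        C.tot adj_uu' (fun h => C.noRetU (two_le_inDeg' hz h (by simp)))
      exact C.acy WV.s (Relation.TransGen.head hz
        (Relation.TransGen.head duu' (Relation.TransGen.single du's)))
    · -- z = u'
      have dus := hsin _ (Or.symm adj_su) (by simp)
      have du'u : C.D WV.u' WV.u :=
        C.tot (Or.symm (adj_uu' (cl := cl))) (fun h => C.noRetU' (two_le_inDeg' hz h (by simp)))
      exact C.acy WV.s (Relation.TransGen.head hz
        (Relation.TransGen.head du'u (Relation.TransGen.single dus)))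
    · -- z = v
      have dus := hsin _ (Or.symm adj_su) (by simp)
      have dvu : C.D WV.v WV.u :=
        C.tot (Or.symm (adj_uv (cl := cl))) (fun h => C.noRetV (two_le_inDeg' hz h (by simp)))
      exact C.acy WV.s (Relation.TransGen.head hz
        (Relation.TransGen.head dvu (Relation.TransGen.single dus)))
    · -- z = v'
      have du's := hsin _ (Or.symm adj_su') (by simp)
      have dv'u' : C.D WV.v' WV.u' :=
        C.tot (Or.symm (adj_u'v' (cl := cl))) (fun h => C.noRetV' (two_le_inDeg' hz h (by simp)))
      exact C.acy WV.s (Relation.TransGen.head hz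
        (Relation.TransGen.head dv'u' (Relation.TransGen.single du's)))
    · -- z = p i : the four gadget vertices all point into s
      have dus := hsin _ (Or.symm adj_su) (by simp)
      have du's := hsin _ (Or.symm adj_su') (by simp)
      have dvs := hsin _ (Or.symm adj_sv) (by simp)
      have dv's := hsin _ (Or.symm adj_sv') (by simp)
      have hnsv : ¬ C.D WV.s WV.v := fun h => by have := houtuq _ h; simp at this
      have duv : C.D WV.u WV.v := by
        obtain ⟨z0, hz0⟩ := C.exists_in (Ne.symm hv)
        rcases mem_nbr_v (C.arc_adj hz0) with rfl | rfl | ⟨k, rfl⟩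
        · exact absurd hz0 hnsv
        · exact hz0
        · exact absurd hz0 (C.sink (leaf_vl k) (Ne.symm (hvl k)))
      have du'u : C.D WV.u' WV.u := by
        obtain ⟨z0, hz0⟩ := C.exists_in (Ne.symm hu)
        rcases mem_nbr_u (C.arc_adj hz0) with rfl | rfl | rfl | ⟨k, rfl⟩
        · have := houtuq _ hz0; simp at this
        · exact hz0
        · exact absurd hz0 (C.not_rev duv)
        · exact absurd hz0 (C.sink (leaf_ul k) (Ne.symm (hul k)))
      have dv'u' : C.D WV.v' WV.u' := by
        obtain ⟨z0, hz0⟩ := C.exists_in (Ne.symm hu')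
        rcases mem_nbr_u' (C.arc_adj hz0) with rfl | rfl | rfl | ⟨k, rfl⟩
        · have := houtuq _ hz0; simp at this
        · exact absurd hz0 (C.not_rev du'u)
        · exact hz0
        · exact absurd hz0 (C.sink (leaf_ul' k) (Ne.symm (hul' k)))
      have h0 : inDeg C.D WV.v' = 0 := inDeg_eq_zero_iff'.2 (fun z0 hz0 => by
        rcases mem_nbr_v' (C.arc_adj hz0) with rfl | rfl | ⟨k, rfl⟩
        · have := houtuq _ hz0; simp at this
        · exact (C.not_rev dv'u') hz0
        · exact C.sink (leaf_vl' k) (Ne.symm (hvl' k)) hz0)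
      exact hv' (C.uniq h0).symm

/-- Every funneled Variant-B phylogenetic orientation of `U` is tree-child. -/
theorem tc : TreeChild C.D := by
  have hroot := C.root_mem
  have hρne : ∀ w : WV n m, w = C.ρ →
      (w = WV.u ∨ w = WV.u' ∨ w = WV.v ∨ w = WV.v' ∨ (∃ k, w = WV.ul k) ∨
        (∃ k, w = WV.ul' k) ∨ (∃ k, w = WV.vl k) ∨ (∃ k, w = WV.vl' k)) := by
    intro w hw; rw [hw]; exact hroot
  have npl : ∀ i : Fin n, (WV.pl i : WV n m) ≠ C.ρ := fun i h => by
    rcases hρne _ h with h' | h' | h' | h' | ⟨k, h'⟩ | ⟨k, h'⟩ | ⟨k, h'⟩ | ⟨k, h'⟩ <;> simp at h'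
  have npl' : ∀ i : Fin n, (WV.pl' i : WV n m) ≠ C.ρ := fun i h => by
    rcases hρne _ h with h' | h' | h' | h' | ⟨k, h'⟩ | ⟨k, h'⟩ | ⟨k, h'⟩ | ⟨k, h'⟩ <;> simp at h'
  have npl0 : (WV.pl0 : WV n m) ≠ C.ρ := fun h => by
    rcases hρne _ h with h' | h' | h' | h' | ⟨k, h'⟩ | ⟨k, h'⟩ | ⟨k, h'⟩ | ⟨k, h'⟩ <;> simp at h'
  have nxl : ∀ i : Fin n, (WV.xl i : WV n m) ≠ C.ρ := fun i h => by
    rcases hρne _ h with h' | h' | h' | h' | ⟨k, h'⟩ | ⟨k, h'⟩ | ⟨k, h'⟩ | ⟨k, h'⟩ <;> simp at h'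
  have ncleaf : ∀ (j : Fin m) (k : Fin 2), (WV.cleaf j k : WV n m) ≠ C.ρ := fun j k h => by
    rcases hρne _ h with h' | h' | h' | h' | ⟨k', h'⟩ | ⟨k', h'⟩ | ⟨k', h'⟩ | ⟨k', h'⟩ <;> simp at h'
  have pendant_child : ∀ (w' ℓ : WV n m), wAdj cl w' ℓ → ℓ ∈ wLeaves n m → ℓ ≠ C.ρ →
      ∃ y, C.D w' y ∧ (IsTreeVertex C.D y ∨ IsLeafVertex C.D y) := fun w' ℓ ha h1 h2 =>
    ⟨ℓ, C.to_leaf ha h1 h2, Or.inr (C.leaf_outdeg h1 h2)⟩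
  intro w hw
  cases w with
  | s =>
    obtain ⟨z, hz⟩ := C.exists_out not_leaf_s
    have hzρ : z ≠ C.ρ := C.child_ne_root hz
    refine ⟨z, hz, Or.inl ?_⟩
    rcases mem_nbr_s (Or.symm (C.arc_adj hz)) with rfl | rfl | rfl | rfl | ⟨i, rfl⟩
    · exact C.tree_of not_leaf_u hzρ C.noRetU
    · exact C.tree_of not_leaf_u' hzρ C.noRetU'
    · exact C.tree_of not_leaf_v hzρ C.noRetV
    · exact C.tree_of not_leaf_v' hzρ C.noRetV'
    · exact C.tree_of (not_leaf_p i) hzρ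
        (C.noRet_two_pendants (by simp) (adj_ppl i) (adj_ppl' i) (leaf_pl i) (leaf_pl' i)
          (npl i) (npl' i))
  | u =>
    by_cases h0 : (WV.ul 0 : WV n m) = C.ρ
    · exact pendant_child _ _ (adj_uul 1) (leaf_ul 1) (by rw [← h0]; simp)
    · exact pendant_child _ _ (adj_uul 0) (leaf_ul 0) h0
  | u' =>
    by_cases h0 : (WV.ul' 0 : WV n m) = C.ρ
    · exact pendant_child _ _ (adj_u'ul' 1) (leaf_ul' 1) (by rw [← h0]; simp)
    · exact pendant_child _ _ (adj_u'ul' 0) (leaf_ul' 0) h0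
  | v =>
    by_cases h0 : (WV.vl 0 : WV n m) = C.ρ
    · exact pendant_child _ _ (adj_vvl 1) (leaf_vl 1) (by rw [← h0]; simp)
    · exact pendant_child _ _ (adj_vvl 0) (leaf_vl 0) h0
  | v' =>
    by_cases h0 : (WV.vl' 0 : WV n m) = C.ρ
    · exact pendant_child _ _ (adj_v'vl' 1) (leaf_vl' 1) (by rw [← h0]; simp)
    · exact pendant_child _ _ (adj_v'vl' 0) (leaf_vl' 0) h0
  | p i => exact pendant_child _ _ (adj_ppl i) (leaf_pl i) (npl i)
  | c j => exact pendant_child _ _ (adj_ccleaf j 0) (leaf_cleaf j 0) (ncleaf j 0)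
  | x i => exact pendant_child _ _ (adj_xxl i) (leaf_xl i) (nxl i)
  | ul k =>
    by_cases h0 : (WV.ul k : WV n m) = C.ρ
    · have hd : C.D (WV.ul k) WV.u :=
        C.tot (Or.symm (adj_uul k)) (by rw [h0]; exact C.not_to_root)
      exact ⟨WV.u, hd, Or.inl (C.tree_of not_leaf_u (C.child_ne_root hd) C.noRetU)⟩
    · exact absurd (C.leaf_outdeg (leaf_ul k) h0) hw
  | ul' k =>
    by_cases h0 : (WV.ul' k : WV n m) = C.ρ
    · have hd : C.D (WV.ul' k) WV.u' :=
        C.tot (Or.symm (adj_u'ul' k)) (by rw [h0]; exact C.not_to_root)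
      exact ⟨WV.u', hd, Or.inl (C.tree_of not_leaf_u' (C.child_ne_root hd) C.noRetU')⟩
    · exact absurd (C.leaf_outdeg (leaf_ul' k) h0) hw
  | vl k =>
    by_cases h0 : (WV.vl k : WV n m) = C.ρ
    · have hd : C.D (WV.vl k) WV.v :=
        C.tot (Or.symm (adj_vvl k)) (by rw [h0]; exact C.not_to_root)
      exact ⟨WV.v, hd, Or.inl (C.tree_of not_leaf_v (C.child_ne_root hd) C.noRetV)⟩
    · exact absurd (C.leaf_outdeg (leaf_vl k) h0) hw
  | vl' k =>
    by_cases h0 : (WV.vl' k : WV n m) = C.ρ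
    · have hd : C.D (WV.vl' k) WV.v' :=
        C.tot (Or.symm (adj_v'vl' k)) (by rw [h0]; exact C.not_to_root)
      exact ⟨WV.v', hd, Or.inl (C.tree_of not_leaf_v' (C.child_ne_root hd) C.noRetV')⟩
    · exact absurd (C.leaf_outdeg (leaf_vl' k) h0) hw
  | pl i => exact absurd (C.leaf_outdeg (leaf_pl i) (npl i)) hw
  | pl' i => exact absurd (C.leaf_outdeg (leaf_pl' i) (npl' i)) hw
  | pl0 => exact absurd (C.leaf_outdeg leaf_pl0 npl0) hw
  | xl i => exact absurd (C.leaf_outdeg (leaf_xl i) (nxl i)) hw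
  | cleaf j k => exact absurd (C.leaf_outdeg (leaf_cleaf j k) (ncleaf j k)) hw

end CtxB
/-! ### Variant A context -/

/-- All hypotheses of a funneled Variant-A orientation, bundled. -/
structure CtxA (n m : ℕ) (cl : Fin m → Finset (Fin n)) where
  a : WV n m
  b : WV n m
  D : Option (WV n m) → Option (WV n m) → Prop
  va : VariantA (wAdj cl) a b D
  phylo : IsRootedPhyloNetwork D none (Option.some '' wLeaves n m)
  funl : Funneled D

instance {n m : ℕ} : Finite (Option (WV n m)) :=
  Finite.of_injective (fun o => (Option.elim o (Sum.inl ()) Sum.inr : Unit ⊕ WV n m))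
    (by rintro (_ | x) (_ | y) h <;> simp_all)

namespace CtxA

variable {n m : ℕ} {cl : Fin m → Finset (Fin n)} (C : CtxA n m cl)

lemma acy : Acyclic C.D := C.phylo.1
lemma uniq {o : Option (WV n m)} (h : inDeg C.D o = 0) : o = none :=
  C.phylo.2.2.2.2.1 o h
lemma leafset : {v | outDeg C.D v = 0} = Option.some '' wLeaves n m :=
  C.phylo.2.2.2.2.2.2.1
lemma internal {o : Option (WV n m)} (h1 : o ≠ none) (h2 : outDeg C.D o ≠ 0) :
    (inDeg C.D o = 1 ∧ 2 ≤ outDeg C.D o) ∨ (2 ≤ inDeg C.D o ∧ 1 ≤ outDeg C.D o) :=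
  C.phylo.2.2.2.2.2.2.2 o h1 h2

lemma hab : C.a ≠ C.b := fun h => adj_irrefl (cl := cl) (h ▸ C.va.1)
lemma droota : C.D none (some C.a) := C.va.2.1
lemma drootb : C.D none (some C.b) := C.va.2.2.1
lemma not_to_none {o : Option (WV n m)} : ¬ C.D o none := C.va.2.2.2.1 o
lemma root_children {w : WV n m} (h : C.D none (some w)) : w = C.a ∨ w = C.b :=
  C.va.2.2.2.2.1 w h
lemma arc_some {w y : WV n m} (h : C.D (some w) (some y)) :
    wAdj cl w y ∧ ¬ SamePair w y C.a C.b := C.va.2.2.2.2.2.1 w y h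
lemma tot {w y : WV n m} (h : wAdj cl w y) (hnp : ¬ SamePair w y C.a C.b)
    (h' : ¬ C.D (some y) (some w)) : C.D (some w) (some y) :=
  (C.va.2.2.2.2.2.2 w y h hnp).2 h'
lemma not_rev {w y : WV n m} (h : C.D (some w) (some y)) : ¬ C.D (some y) (some w) := by
  obtain ⟨hadj, hnp⟩ := C.arc_some h
  exact (C.va.2.2.2.2.2.2 w y hadj hnp).1 h
lemma tot_or {w y : WV n m} (h : wAdj cl w y) (hnp : ¬ SamePair w y C.a C.b) :
    C.D (some w) (some y) ∨ C.D (some y) (some w) := by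
  by_cases hb : C.D (some y) (some w)
  · exact Or.inr hb
  · exact Or.inl (C.tot h hnp hb)

lemma pair_shape {P Q : WV n m} (h : SamePair P Q C.a C.b) :
    ∀ w y, SamePair w y C.a C.b → (w = P ∧ y = Q) ∨ (w = Q ∧ y = P) := by
  rcases h with ⟨h1, h2⟩ | ⟨h1, h2⟩ <;> rintro w y (⟨rfl, rfl⟩ | ⟨rfl, rfl⟩)
  · exact Or.inl ⟨h1.symm, h2.symm⟩
  · exact Or.inr ⟨h2.symm, h1.symm⟩
  · exact Or.inr ⟨h2.symm, h1.symm⟩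
  · exact Or.inl ⟨h1.symm, h2.symm⟩

lemma pair_unique {w ℓ1 ℓ2 : WV n m} (h1 : SamePair w ℓ1 C.a C.b)
    (h2 : SamePair w ℓ2 C.a C.b) : ℓ1 = ℓ2 := by
  rcases h1 with ⟨e1, e2⟩ | ⟨e1, e2⟩ <;> rcases h2 with ⟨f1, f2⟩ | ⟨f1, f2⟩
  · exact e2.trans f2.symm
  · exact absurd (e1.symm.trans f1) C.hab
  · exact absurd (f1.symm.trans e1) C.hab
  · exact e2.trans f2.symm

lemma leaf_outdeg {ℓ : WV n m} (h : ℓ ∈ wLeaves n m) : outDeg C.D (some ℓ) = 0 := by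
  have : (some ℓ : Option (WV n m)) ∈ Option.some '' wLeaves n m := ⟨ℓ, h, rfl⟩
  rw [← C.leafset] at this
  exact this

lemma sink {ℓ : WV n m} {y : Option (WV n m)} (h : ℓ ∈ wLeaves n m) :
    ¬ C.D (some ℓ) y := outDeg_eq_zero_iff'.1 (C.leaf_outdeg h) y

lemma to_leaf {w ℓ : WV n m} (hadj : wAdj cl w ℓ) (hl : ℓ ∈ wLeaves n m)
    (hnp : ¬ SamePair w ℓ C.a C.b) : C.D (some w) (some ℓ) :=
  C.tot hadj hnp (C.sink hl)

lemma out_ne_zero {w : WV n m} (h : w ∉ wLeaves n m) : outDeg C.D (some w) ≠ 0 := by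
  intro h0
  have : (some w : Option (WV n m)) ∈ Option.some '' wLeaves n m := by
    rw [← C.leafset]; exact h0
  obtain ⟨ℓ, hℓ, heq⟩ := this
  exact h (Option.some_injective _ heq ▸ hℓ)

lemma exists_out_some {w : WV n m} (h : w ∉ wLeaves n m) :
    ∃ z, C.D (some w) (some z) := by
  have h1 : ∃ y, C.D (some w) y := by
    by_contra hc
    push_neg at hc
    exact C.out_ne_zero h (outDeg_eq_zero_iff'.2 hc)
  obtain ⟨y, hy⟩ := h1
  cases y with
  | none => exact absurd hy C.not_to_none
  | some z => exact ⟨z, hy⟩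

lemma exists_in {o : Option (WV n m)} (h : o ≠ none) : ∃ z, C.D z o := by
  apply exists_in_of_inDeg_ne_zero
  intro h0
  exact h (C.uniq h0)

lemma in_cases {z : Option (WV n m)} {w : WV n m} (h : C.D z (some w)) :
    (z = none ∧ (w = C.a ∨ w = C.b)) ∨
      ∃ z0, z = some z0 ∧ wAdj cl z0 w ∧ ¬ SamePair z0 w C.a C.b := by
  cases z with
  | none => exact Or.inl ⟨rfl, C.root_children h⟩
  | some z0 => exact Or.inr ⟨z0, rfl, C.arc_some h⟩

lemma tree_of {w : WV n m} (hnl : w ∉ wLeaves n m)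
    (h : ¬ 2 ≤ inDeg C.D (some w)) : IsTreeVertex C.D (some w) := by
  rcases C.internal (by simp) (C.out_ne_zero hnl) with ⟨h1, h2⟩ | ⟨h1, _⟩
  · exact ⟨h1, by omega⟩
  · exact absurd h1 h

lemma noRet_two_pendants {w ℓ1 ℓ2 : WV n m} (hne : ℓ1 ≠ ℓ2)
    (ha1 : wAdj cl w ℓ1) (ha2 : wAdj cl w ℓ2)
    (hl1 : ℓ1 ∈ wLeaves n m) (hl2 : ℓ2 ∈ wLeaves n m)
    (hnp1 : ¬ SamePair w ℓ1 C.a C.b) (hnp2 : ¬ SamePair w ℓ2 C.a C.b) :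
    ¬ 2 ≤ inDeg C.D (some w) := by
  intro h2
  have hout := C.funl _ h2
  have d1 := C.to_leaf ha1 hl1 hnp1
  have d2 := C.to_leaf ha2 hl2 hnp2
  have := two_le_outDeg' d1 d2 (fun h => hne (Option.some_injective _ h))
  omega

/-- `v` is never a reticulation (Variant A). -/
lemma noRetVA : ¬ 2 ≤ inDeg C.D (some (WV.v : WV n m)) := by
  by_cases hp0 : SamePair (WV.v : WV n m) (WV.vl 0) C.a C.b
  · exact C.noRet_two_pendants (by simp) (adj_vvl 1) (adj_vvl 2) (leaf_vl 1) (leaf_vl 2)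
      (fun h => by have := C.pair_unique hp0 h; simp at this)
      (fun h => by have := C.pair_unique hp0 h; simp at this)
  · by_cases hp1 : SamePair (WV.v : WV n m) (WV.vl 1) C.a C.b
    · exact C.noRet_two_pendants (by simp) (adj_vvl 0) (adj_vvl 2) (leaf_vl 0) (leaf_vl 2)
        (fun h => by have := C.pair_unique hp1 h; simp at this)
        (fun h => by have := C.pair_unique hp1 h; simp at this)
    · exact C.noRet_two_pendants (by simp) (adj_vvl 0) (adj_vvl 1) (leaf_vl 0) (leaf_vl 1)
        hp0 hp1

/-- `v'` is never a reticulation (Variant A). -/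
lemma noRetV'A : ¬ 2 ≤ inDeg C.D (some (WV.v' : WV n m)) := by
  by_cases hp0 : SamePair (WV.v' : WV n m) (WV.vl' 0) C.a C.b
  · exact C.noRet_two_pendants (by simp) (adj_v'vl' 1) (adj_v'vl' 2) (leaf_vl' 1) (leaf_vl' 2)
      (fun h => by have := C.pair_unique hp0 h; simp at this)
      (fun h => by have := C.pair_unique hp0 h; simp at this)
  · by_cases hp1 : SamePair (WV.v' : WV n m) (WV.vl' 1) C.a C.b
    · exact C.noRet_two_pendants (by simp) (adj_v'vl' 0) (adj_v'vl' 2) (leaf_vl' 0) (leaf_vl' 2)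
        (fun h => by have := C.pair_unique hp1 h; simp at this)
        (fun h => by have := C.pair_unique hp1 h; simp at this)
    · exact C.noRet_two_pendants (by simp) (adj_v'vl' 0) (adj_v'vl' 1) (leaf_vl' 0) (leaf_vl' 1)
        hp0 hp1

end CtxA
namespace CtxA

variable {n m : ℕ} {cl : Fin m → Finset (Fin n)} (C : CtxA n m cl)

/-- `u` is not a reticulation when `s → u` (Variant A). -/
lemma noRetUA (hsu : C.D (some WV.s) (some WV.u)) :
    ¬ 2 ≤ inDeg C.D (some (WV.u : WV n m)) := by
  intro h2
  have hout := C.funl _ h2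
  obtain ⟨k, k', hkk, hk⟩ : ∃ k k' : Fin 2, (WV.ul k' : WV n m) ≠ WV.ul k ∧
      SamePair (WV.u : WV n m) (WV.ul k) C.a C.b := by
    by_cases hp0 : SamePair (WV.u : WV n m) (WV.ul 0) C.a C.b
    · exact ⟨0, 1, by simp, hp0⟩
    · by_cases hp1 : SamePair (WV.u : WV n m) (WV.ul 1) C.a C.b
      · exact ⟨1, 0, by simp, hp1⟩
      · exact absurd h2 (C.noRet_two_pendants (by simp) (adj_uul 0) (adj_uul 1)
          (leaf_ul 0) (leaf_ul 1) hp0 hp1)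
  have hPQ := C.pair_shape hk
  have hnp : ∀ w y : WV n m, w ≠ WV.u → (∀ k2 : Fin 2, w ≠ WV.ul k2) →
      ¬ SamePair w y C.a C.b := fun w y h1 h2' h => by
    rcases hPQ _ _ h with ⟨h3, _⟩ | ⟨h3, _⟩
    · exact h1 h3
    · exact h2' k h3
  have hnotab : ∀ w : WV n m, w ≠ WV.u → (∀ k2 : Fin 2, w ≠ WV.ul k2) →
      ¬ (w = C.a ∨ w = C.b) := fun w h1 h2' hc => by
    rcases hk with ⟨e1, e2⟩ | ⟨e1, e2⟩ <;> rcases hc with h3 | h3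
    · exact h1 (h3.trans e1.symm)
    · exact h2' k (h3.trans e2.symm)
    · exact h2' k (h3.trans e2.symm)
    · exact h1 (h3.trans e1.symm)
  have houtl : C.D (some WV.u) (some (WV.ul k')) := C.to_leaf (adj_uul k') (leaf_ul k')
    (fun h => by
      rcases hPQ _ _ h with ⟨_, h2'⟩ | ⟨h1, _⟩
      · exact hkk h2'
      · simp at h1)
  have huniq : ∀ y, C.D (some WV.u) y → y = some (WV.ul k') := fun y hy =>
    outDeg_one_unique hout hy houtl
  have du'u : C.D (some WV.u') (some WV.u) := C.tot (Or.symm (adj_uu' (cl := cl)))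
    (hnp _ _ (by simp) (by simp)) (fun h => by have := huniq _ h; simp at this)
  have dvu : C.D (some WV.v) (some WV.u) := C.tot (Or.symm (adj_uv (cl := cl)))
    (hnp _ _ (by simp) (by simp)) (fun h => by have := huniq _ h; simp at this)
  have hv_in : ∀ z, C.D z (some WV.v) → z = some WV.s := by
    intro z hz
    rcases C.in_cases hz with ⟨rfl, hc⟩ | ⟨z0, rfl, hadj, _⟩
    · exact absurd hc (hnotab _ (by simp) (by simp))
    · rcases mem_nbr_v hadj with rfl | rfl | ⟨kk2, rfl⟩
      · rfl
      · exact absurd (huniq _ hz) (by simp)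
      · exact absurd hz (C.sink (leaf_vl kk2))
  have du'l : C.D (some WV.u') (some (WV.ul' 0)) := C.to_leaf (adj_u'ul' 0) (leaf_ul' 0)
    (hnp _ _ (by simp) (by simp))
  have hu'one : ∀ z1 z2, C.D z1 (some WV.u') → C.D z2 (some WV.u') → z1 = z2 := by
    intro z1 z2 hz1 hz2
    by_contra hne
    have := outDeg_one_unique (C.funl _ (two_le_inDeg' hz1 hz2 hne)) du'u du'l
    simp at this
  have dv'0 : C.D (some WV.v') (some (WV.vl' 0)) := C.to_leaf (adj_v'vl' 0) (leaf_vl' 0)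
    (hnp _ _ (by simp) (by simp))
  have dv'1 : C.D (some WV.v') (some (WV.vl' 1)) := C.to_leaf (adj_v'vl' 1) (leaf_vl' 1)
    (hnp _ _ (by simp) (by simp))
  have hv'one : ∀ z1 z2, C.D z1 (some WV.v') → C.D z2 (some WV.v') → z1 = z2 := by
    intro z1 z2 hz1 hz2
    by_contra hne
    have := outDeg_one_unique (C.funl _ (two_le_inDeg' hz1 hz2 hne)) dv'0 dv'1
    simp at this
  have scontr : C.D (some WV.u') (some WV.s) → C.D (some WV.v') (some WV.s) → False := by
    intro du's dv's
    have h2s := two_le_inDeg' du's dv's (by simp)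
    have houts := C.funl _ h2s
    have hnsv : ¬ C.D (some WV.s) (some WV.v) := fun h => by
      have := outDeg_one_unique houts h hsu; simp at this
    have h0 : inDeg C.D (some WV.v) = 0 := inDeg_eq_zero_iff'.2 (fun z hz => by
      have := hv_in z hz; subst this; exact hnsv hz)
    have := C.uniq h0; simp at this
  have np1 : ¬ SamePair (WV.s : WV n m) WV.u' C.a C.b := hnp _ _ (by simp) (by simp)
  have np2 : ¬ SamePair (WV.u' : WV n m) WV.v' C.a C.b := hnp _ _ (by simp) (by simp)
  have np3 : ¬ SamePair (WV.s : WV n m) WV.v' C.a C.b := hnp _ _ (by simp) (by simp)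
  rcases C.tot_or adj_su' np1 with dsu' | du's
  · rcases C.tot_or adj_u'v' np2 with du'v' | dv'u'
    · rcases C.tot_or adj_sv' np3 with dsv' | dv's
      · have := hv'one _ _ dsv' du'v'; simp at this
      · exact C.acy (some WV.s) (Relation.TransGen.head dsu'
          (Relation.TransGen.head du'v' (Relation.TransGen.single dv's)))
    · have := hu'one _ _ dsu' dv'u'; simp at this
  · rcases C.tot_or adj_u'v' np2 with du'v' | dv'u'
    · rcases C.tot_or adj_sv' np3 with dsv' | dv's
      · have := hv'one _ _ dsv' du'v'; simp at this
      · exact scontr du's dv's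
    · rcases C.tot_or adj_sv' np3 with dsv' | dv's
      · exact C.acy (some WV.s) (Relation.TransGen.head dsv'
          (Relation.TransGen.head dv'u' (Relation.TransGen.single du's)))
      · exact scontr du's dv's

/-- `u'` is not a reticulation when `s → u'` (Variant A). -/
lemma noRetU'A (hsu' : C.D (some WV.s) (some WV.u')) :
    ¬ 2 ≤ inDeg C.D (some (WV.u' : WV n m)) := by
  intro h2
  have hout := C.funl _ h2
  obtain ⟨k, k', hkk, hk⟩ : ∃ k k' : Fin 2, (WV.ul' k' : WV n m) ≠ WV.ul' k ∧
      SamePair (WV.u' : WV n m) (WV.ul' k) C.a C.b := by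
    by_cases hp0 : SamePair (WV.u' : WV n m) (WV.ul' 0) C.a C.b
    · exact ⟨0, 1, by simp, hp0⟩
    · by_cases hp1 : SamePair (WV.u' : WV n m) (WV.ul' 1) C.a C.b
      · exact ⟨1, 0, by simp, hp1⟩
      · exact absurd h2 (C.noRet_two_pendants (by simp) (adj_u'ul' 0) (adj_u'ul' 1)
          (leaf_ul' 0) (leaf_ul' 1) hp0 hp1)
  have hPQ := C.pair_shape hk
  have hnp : ∀ w y : WV n m, w ≠ WV.u' → (∀ k2 : Fin 2, w ≠ WV.ul' k2) →
      ¬ SamePair w y C.a C.b := fun w y h1 h2' h => by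
    rcases hPQ _ _ h with ⟨h3, _⟩ | ⟨h3, _⟩
    · exact h1 h3
    · exact h2' k h3
  have hnotab : ∀ w : WV n m, w ≠ WV.u' → (∀ k2 : Fin 2, w ≠ WV.ul' k2) →
      ¬ (w = C.a ∨ w = C.b) := fun w h1 h2' hc => by
    rcases hk with ⟨e1, e2⟩ | ⟨e1, e2⟩ <;> rcases hc with h3 | h3
    · exact h1 (h3.trans e1.symm)
    · exact h2' k (h3.trans e2.symm)
    · exact h2' k (h3.trans e2.symm)
    · exact h1 (h3.trans e1.symm)
  have houtl : C.D (some WV.u') (some (WV.ul' k')) := C.to_leaf (adj_u'ul' k') (leaf_ul' k')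
    (fun h => by
      rcases hPQ _ _ h with ⟨_, h2'⟩ | ⟨h1, _⟩
      · exact hkk h2'
      · simp at h1)
  have huniq : ∀ y, C.D (some WV.u') y → y = some (WV.ul' k') := fun y hy =>
    outDeg_one_unique hout hy houtl
  have duu' : C.D (some WV.u) (some WV.u') := C.tot (adj_uu' (cl := cl))
    (hnp _ _ (by simp) (by simp)) (fun h => by have := huniq _ h; simp at this)
  have dv'u' : C.D (some WV.v') (some WV.u') := C.tot (Or.symm (adj_u'v' (cl := cl)))
    (hnp _ _ (by simp) (by simp)) (fun h => by have := huniq _ h; simp at this)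
  have hv'_in : ∀ z, C.D z (some WV.v') → z = some WV.s := by
    intro z hz
    rcases C.in_cases hz with ⟨rfl, hc⟩ | ⟨z0, rfl, hadj, _⟩
    · exact absurd hc (hnotab _ (by simp) (by simp))
    · rcases mem_nbr_v' hadj with rfl | rfl | ⟨kk2, rfl⟩
      · rfl
      · exact absurd (huniq _ hz) (by simp)
      · exact absurd hz (C.sink (leaf_vl' kk2))
  have dul : C.D (some WV.u) (some (WV.ul 0)) := C.to_leaf (adj_uul 0) (leaf_ul 0)
    (hnp _ _ (by simp) (by simp))
  have huone : ∀ z1 z2, C.D z1 (some WV.u) → C.D z2 (some WV.u) → z1 = z2 := by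
    intro z1 z2 hz1 hz2
    by_contra hne
    have := outDeg_one_unique (C.funl _ (two_le_inDeg' hz1 hz2 hne)) duu' dul
    simp at this
  have dv0 : C.D (some WV.v) (some (WV.vl 0)) := C.to_leaf (adj_vvl 0) (leaf_vl 0)
    (hnp _ _ (by simp) (by simp))
  have dv1 : C.D (some WV.v) (some (WV.vl 1)) := C.to_leaf (adj_vvl 1) (leaf_vl 1)
    (hnp _ _ (by simp) (by simp))
  have hvone : ∀ z1 z2, C.D z1 (some WV.v) → C.D z2 (some WV.v) → z1 = z2 := by
    intro z1 z2 hz1 hz2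
    by_contra hne
    have := outDeg_one_unique (C.funl _ (two_le_inDeg' hz1 hz2 hne)) dv0 dv1
    simp at this
  have scontr : C.D (some WV.u) (some WV.s) → C.D (some WV.v) (some WV.s) → False := by
    intro dus dvs
    have h2s := two_le_inDeg' dus dvs (by simp)
    have houts := C.funl _ h2s
    have hnsv' : ¬ C.D (some WV.s) (some WV.v') := fun h => by
      have := outDeg_one_unique houts h hsu'; simp at this
    have h0 : inDeg C.D (some WV.v') = 0 := inDeg_eq_zero_iff'.2 (fun z hz => by
      have := hv'_in z hz; subst this; exact hnsv' hz)
    have := C.uniq h0; simp at this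
  have np1 : ¬ SamePair (WV.s : WV n m) WV.u C.a C.b := hnp _ _ (by simp) (by simp)
  have np2 : ¬ SamePair (WV.u : WV n m) WV.v C.a C.b := hnp _ _ (by simp) (by simp)
  have np3 : ¬ SamePair (WV.s : WV n m) WV.v C.a C.b := hnp _ _ (by simp) (by simp)
  rcases C.tot_or adj_su np1 with dsu | dus
  · rcases C.tot_or adj_uv np2 with duv | dvu
    · rcases C.tot_or adj_sv np3 with dsv | dvs
      · have := hvone _ _ dsv duv; simp at this
      · exact C.acy (some WV.s) (Relation.TransGen.head dsu
          (Relation.TransGen.head duv (Relation.TransGen.single dvs)))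
    · have := huone _ _ dsu dvu; simp at this
  · rcases C.tot_or adj_uv np2 with duv | dvu
    · rcases C.tot_or adj_sv np3 with dsv | dvs
      · have := hvone _ _ dsv duv; simp at this
      · exact scontr dus dvs
    · rcases C.tot_or adj_sv np3 with dsv | dvs
      · exact C.acy (some WV.s) (Relation.TransGen.head dsv
          (Relation.TransGen.head dvu (Relation.TransGen.single dus)))
      · exact scontr dus dvs

end CtxA
namespace CtxA

variable {n m : ℕ} {cl : Fin m → Finset (Fin n)} (C : CtxA n m cl)

/-- A caterpillar vertex that is a child of `s` is not a reticulation (Variant A). -/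
lemma noRetPA {i : Fin n} (hsp : C.D (some WV.s) (some (WV.p i))) :
    ¬ 2 ≤ inDeg C.D (some (WV.p i : WV n m)) := by
  intro h2
  obtain ⟨ℓp, hℓshape, hk⟩ : ∃ ℓp : WV n m,
      ((∃ i', ℓp = WV.pl i') ∨ (∃ i', ℓp = WV.pl' i')) ∧
        SamePair (WV.p i : WV n m) ℓp C.a C.b := by
    by_cases hp0 : SamePair (WV.p i : WV n m) (WV.pl i) C.a C.b
    · exact ⟨_, Or.inl ⟨i, rfl⟩, hp0⟩
    · by_cases hp1 : SamePair (WV.p i : WV n m) (WV.pl' i) C.a C.b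
      · exact ⟨_, Or.inr ⟨i, rfl⟩, hp1⟩
      · exact absurd h2 (C.noRet_two_pendants (by simp) (adj_ppl i) (adj_ppl' i)
          (leaf_pl i) (leaf_pl' i) hp0 hp1)
  have hPQ := C.pair_shape hk
  have hℓne : ∀ w : WV n m, w = WV.s ∨ w = WV.u ∨ w = WV.u' ∨ w = WV.v ∨ w = WV.v' →
      w ≠ ℓp := by
    rintro w (rfl | rfl | rfl | rfl | rfl) <;>
      (rcases hℓshape with ⟨i', rfl⟩ | ⟨i', rfl⟩ <;> simp)
  have hnp : ∀ w y : WV n m,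
      (w = WV.s ∨ w = WV.u ∨ w = WV.u' ∨ w = WV.v ∨ w = WV.v') →
      ¬ SamePair w y C.a C.b := fun w y hw h => by
    rcases hPQ _ _ h with ⟨h3, _⟩ | ⟨h3, _⟩
    · rcases hw with rfl | rfl | rfl | rfl | rfl <;> simp at h3
    · exact hℓne w hw h3
  have hnotab : ∀ w : WV n m,
      (w = WV.s ∨ w = WV.u ∨ w = WV.u' ∨ w = WV.v ∨ w = WV.v') →
      ¬ (w = C.a ∨ w = C.b) := fun w hw hc => by
    rcases hk with ⟨e1, e2⟩ | ⟨e1, e2⟩ <;> rcases hc with h3 | h3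
    · have := h3.trans e1.symm
      rcases hw with rfl | rfl | rfl | rfl | rfl <;> simp at this
    · exact hℓne w hw (h3.trans e2.symm)
    · exact hℓne w hw (h3.trans e2.symm)
    · have := h3.trans e1.symm
      rcases hw with rfl | rfl | rfl | rfl | rfl <;> simp at this
  -- s has in-degree at least two
  have h2s : 2 ≤ inDeg C.D (some WV.s) := by
    rcases C.internal (show (some WV.s : Option (WV n m)) ≠ none by simp)
      (C.out_ne_zero not_leaf_s) with ⟨hin1, _⟩ | ⟨h, _⟩
    · exfalso
      obtain ⟨w0, hw0⟩ := exists_in_of_inDeg_ne_zero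
        (show inDeg C.D (some WV.s) ≠ 0 by omega)
      have hinuq : ∀ z, C.D z (some WV.s) → z = w0 := by
        intro z hz
        by_contra hne
        have := two_le_inDeg' hz hw0 hne
        omega
      have hsout : ∀ y : WV n m, wAdj cl WV.s y → some y ≠ w0 →
          C.D (some WV.s) (some y) := fun y ha hne =>
        C.tot ha (hnp _ _ (Or.inl rfl)) (fun h => hne (hinuq _ h))
      rcases C.in_cases hw0 with ⟨rfl, hc⟩ | ⟨z0, rfl, hadj, _⟩
      · exact hnotab _ (Or.inl rfl) hc
      · rcases mem_nbr_s hadj with rfl | rfl | rfl | rfl | ⟨i2, rfl⟩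
        · have dsu' := hsout _ adj_su' (by simp)
          have dsv' := hsout _ adj_sv' (by simp)
          rcases C.tot_or adj_u'v' (hnp _ _ (by simp)) with h1 | h1
          · exact C.noRetV'A (two_le_inDeg' dsv' h1 (by simp)) 
          · exact C.noRetU'A dsu' (two_le_inDeg' dsu' h1 (by simp))
        · have dsu := hsout _ adj_su (by simp)
          have dsv := hsout _ adj_sv (by simp)
          rcases C.tot_or adj_uv (hnp _ _ (by simp)) with h1 | h1
          · exact C.noRetVA (two_le_inDeg' dsv h1 (by simp))
          · exact C.noRetUA dsu (two_le_inDeg' dsu h1 (by simp))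
        all_goals {
          have dsu := hsout _ adj_su (by simp)
          have dsu' := hsout _ adj_su' (by simp)
          rcases C.tot_or adj_uu' (hnp _ _ (by simp)) with h1 | h1
          · exact C.noRetU'A dsu' (two_le_inDeg' dsu' h1 (by simp))
          · exact C.noRetUA dsu (two_le_inDeg' dsu h1 (by simp)) }
    · exact h
  have houts := C.funl _ h2s
  have houtuq : ∀ y, C.D (some WV.s) y → y = some (WV.p i) := fun y hy =>
    outDeg_one_unique houts hy hsp
  have dus : C.D (some WV.u) (some WV.s) := C.tot (Or.symm (adj_su (cl := cl)))
    (hnp _ _ (by simp)) (fun h => by have := houtuq _ h; simp at this)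
  have du's : C.D (some WV.u') (some WV.s) := C.tot (Or.symm (adj_su' (cl := cl)))
    (hnp _ _ (by simp)) (fun h => by have := houtuq _ h; simp at this)
  have dv's : C.D (some WV.v') (some WV.s) := C.tot (Or.symm (adj_sv' (cl := cl)))
    (hnp _ _ (by simp)) (fun h => by have := houtuq _ h; simp at this)
  have duv : C.D (some WV.u) (some WV.v) := by
    obtain ⟨z0, hz0⟩ := C.exists_in (show (some WV.v : Option (WV n m)) ≠ none by simp)
    rcases C.in_cases hz0 with ⟨rfl, hc⟩ | ⟨z1, rfl, hadj, _⟩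
    · exact absurd hc (hnotab _ (by simp))
    · rcases mem_nbr_v hadj with rfl | rfl | ⟨kk2, rfl⟩
      · exact absurd (houtuq _ hz0) (by simp)
      · exact hz0
      · exact absurd hz0 (C.sink (leaf_vl kk2))
  have du'u : C.D (some WV.u') (some WV.u) := by
    obtain ⟨z0, hz0⟩ := C.exists_in (show (some WV.u : Option (WV n m)) ≠ none by simp)
    rcases C.in_cases hz0 with ⟨rfl, hc⟩ | ⟨z1, rfl, hadj, _⟩
    · exact absurd hc (hnotab _ (by simp))
    · rcases mem_nbr_u hadj with rfl | rfl | rfl | ⟨kk2, rfl⟩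
      · exact absurd (houtuq _ hz0) (by simp)
      · exact hz0
      · exact absurd hz0 (C.not_rev duv)
      · exact absurd hz0 (C.sink (leaf_ul kk2))
  have dv'u' : C.D (some WV.v') (some WV.u') := by
    obtain ⟨z0, hz0⟩ := C.exists_in (show (some WV.u' : Option (WV n m)) ≠ none by simp)
    rcases C.in_cases hz0 with ⟨rfl, hc⟩ | ⟨z1, rfl, hadj, _⟩
    · exact absurd hc (hnotab _ (by simp))
    · rcases mem_nbr_u' hadj with rfl | rfl | rfl | ⟨kk2, rfl⟩
      · exact absurd (houtuq _ hz0) (by simp)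
      · exact absurd hz0 (C.not_rev du'u)
      · exact hz0
      · exact absurd hz0 (C.sink (leaf_ul' kk2))
  have h0 : inDeg C.D (some WV.v') = 0 := inDeg_eq_zero_iff'.2 (fun z0 hz0 => by
    rcases C.in_cases hz0 with ⟨rfl, hc⟩ | ⟨z1, rfl, hadj, _⟩
    · exact absurd hc (hnotab _ (by simp))
    · rcases mem_nbr_v' hadj with rfl | rfl | ⟨kk2, rfl⟩
      · exact absurd (houtuq _ hz0) (by simp)
      · exact (C.not_rev dv'u') hz0
      · exact C.sink (leaf_vl' kk2) hz0)
  have := C.uniq h0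
  simp at this

end CtxA
namespace CtxA

variable {n m : ℕ} {cl : Fin m → Finset (Fin n)} (C : CtxA n m cl)

/-- Every funneled Variant-A phylogenetic orientation of `U` is tree-child. -/
theorem tcA : TreeChild C.D := by
  have pendant_childA : ∀ (w' ℓ1 ℓ2 : WV n m), ℓ1 ≠ ℓ2 → wAdj cl w' ℓ1 →
      wAdj cl w' ℓ2 → ℓ1 ∈ wLeaves n m → ℓ2 ∈ wLeaves n m →
      ∃ y, C.D (some w') y ∧ (IsTreeVertex C.D y ∨ IsLeafVertex C.D y) := by
    intro w' ℓ1 ℓ2 hne ha1 ha2 hl1 hl2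
    by_cases hp : SamePair w' ℓ1 C.a C.b
    · exact ⟨some ℓ2, C.to_leaf ha2 hl2 (fun h => hne (C.pair_unique hp h)),
        Or.inr (C.leaf_outdeg hl2)⟩
    · exact ⟨some ℓ1, C.to_leaf ha1 hl1 hp, Or.inr (C.leaf_outdeg hl1)⟩
  intro o ho
  cases o with
  | none =>
    by_cases hha : C.a ∈ wLeaves n m
    · exact ⟨some C.a, C.droota, Or.inr (C.leaf_outdeg hha)⟩
    · by_cases hhb : C.b ∈ wLeaves n m
      · exact ⟨some C.b, C.drootb, Or.inr (C.leaf_outdeg hhb)⟩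
      · have hadj := C.va.1
        have hda := C.droota
        have hdb := C.drootb
        have key : ∃ z, C.D none (some z) ∧ z ∉ wLeaves n m ∧
            (z = WV.u ∨ z = WV.u' ∨ z = WV.v ∨ z = WV.v' ∨
              (∃ i, z = WV.p i) ∨ (∃ j, z = WV.c j)) := by
          rcases hA : C.a with _ | _ | _ | _ | _ | k | k | k | k | i | i | i | _ | i | i | j | ⟨j, k⟩
          · -- a = s : switch to b
            rw [hA] at hadj
            rcases mem_nbr_s (Or.symm hadj) with hb | hb | hb | hb | ⟨i, hb⟩ <;>
              rw [hb] at hdb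
            · exact ⟨_, hdb, not_leaf_u, by simp⟩
            · exact ⟨_, hdb, not_leaf_u', by simp⟩
            · exact ⟨_, hdb, not_leaf_v, by simp⟩
            · exact ⟨_, hdb, not_leaf_v', by simp⟩
            · exact ⟨_, hdb, not_leaf_p i, by simp⟩
          · rw [hA] at hda; exact ⟨_, hda, not_leaf_u, by simp⟩
          · rw [hA] at hda; exact ⟨_, hda, not_leaf_u', by simp⟩
          · rw [hA] at hda; exact ⟨_, hda, not_leaf_v, by simp⟩
          · rw [hA] at hda; exact ⟨_, hda, not_leaf_v', by simp⟩
          · exact absurd (by rw [hA]; exact leaf_ul k) hha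
          · exact absurd (by rw [hA]; exact leaf_ul' k) hha
          · exact absurd (by rw [hA]; exact leaf_vl k) hha
          · exact absurd (by rw [hA]; exact leaf_vl' k) hha
          · rw [hA] at hda; exact ⟨_, hda, not_leaf_p i, by simp⟩
          · exact absurd (by rw [hA]; exact leaf_pl i) hha
          · exact absurd (by rw [hA]; exact leaf_pl' i) hha
          · exact absurd (by rw [hA]; exact leaf_pl0) hha
          · -- a = x i : switch to b
            rw [hA] at hadj
            rcases mem_nbr_x (Or.symm hadj) with hb | hb | ⟨j, hb⟩
            · rw [hb] at hdb; exact ⟨_, hdb, not_leaf_p i, by simp⟩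
            · exact absurd (by rw [hb]; exact leaf_xl i) hhb
            · rw [hb] at hdb; exact ⟨_, hdb, not_leaf_c j, by simp⟩
          · exact absurd (by rw [hA]; exact leaf_xl i) hha
          · rw [hA] at hda; exact ⟨_, hda, not_leaf_c j, by simp⟩
          · exact absurd (by rw [hA]; exact leaf_cleaf j k) hha
        obtain ⟨z, hz1, hz2, hz3⟩ := key
        refine ⟨some z, hz1, Or.inl (C.tree_of hz2 ?_)⟩
        have hnp_any : ∀ (w y : WV n m), y ∈ wLeaves n m → ¬ SamePair w y C.a C.b := by
          rintro w y hy (⟨rfl, rfl⟩ | ⟨rfl, rfl⟩)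
          · exact hhb hy
          · exact hha hy
        rcases hz3 with rfl | rfl | rfl | rfl | ⟨i, rfl⟩ | ⟨j, rfl⟩
        · exact C.noRet_two_pendants (by simp) (adj_uul 0) (adj_uul 1) (leaf_ul 0)
            (leaf_ul 1) (hnp_any _ _ (leaf_ul 0)) (hnp_any _ _ (leaf_ul 1))
        · exact C.noRet_two_pendants (by simp) (adj_u'ul' 0) (adj_u'ul' 1) (leaf_ul' 0)
            (leaf_ul' 1) (hnp_any _ _ (leaf_ul' 0)) (hnp_any _ _ (leaf_ul' 1))
        · exact C.noRet_two_pendants (by simp) (adj_vvl 0) (adj_vvl 1) (leaf_vl 0)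
            (leaf_vl 1) (hnp_any _ _ (leaf_vl 0)) (hnp_any _ _ (leaf_vl 1))
        · exact C.noRet_two_pendants (by simp) (adj_v'vl' 0) (adj_v'vl' 1) (leaf_vl' 0)
            (leaf_vl' 1) (hnp_any _ _ (leaf_vl' 0)) (hnp_any _ _ (leaf_vl' 1))
        · exact C.noRet_two_pendants (by simp) (adj_ppl i) (adj_ppl' i) (leaf_pl i)
            (leaf_pl' i) (hnp_any _ _ (leaf_pl i)) (hnp_any _ _ (leaf_pl' i))
        · exact C.noRet_two_pendants (by simp) (adj_ccleaf j 0) (adj_ccleaf j 1)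
            (leaf_cleaf j 0) (leaf_cleaf j 1) (hnp_any _ _ (leaf_cleaf j 0))
            (hnp_any _ _ (leaf_cleaf j 1))
  | some w =>
    cases w with
    | s =>
      obtain ⟨z, hz⟩ := C.exists_out_some not_leaf_s
      refine ⟨some z, hz, Or.inl ?_⟩
      have hzadj := (C.arc_some hz).1
      rcases mem_nbr_s (Or.symm hzadj) with rfl | rfl | rfl | rfl | ⟨i, rfl⟩
      · exact C.tree_of not_leaf_u (C.noRetUA hz)
      · exact C.tree_of not_leaf_u' (C.noRetU'A hz)
      · exact C.tree_of not_leaf_v C.noRetVA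
      · exact C.tree_of not_leaf_v' C.noRetV'A
      · exact C.tree_of (not_leaf_p i) (C.noRetPA hz)
    | u => exact pendant_childA _ _ _ (by simp) (adj_uul 0) (adj_uul 1) (leaf_ul 0) (leaf_ul 1)
    | u' => exact pendant_childA _ _ _ (by simp) (adj_u'ul' 0) (adj_u'ul' 1) (leaf_ul' 0) (leaf_ul' 1)
    | v => exact pendant_childA _ _ _ (by simp) (adj_vvl 0) (adj_vvl 1) (leaf_vl 0) (leaf_vl 1)
    | v' => exact pendant_childA _ _ _ (by simp) (adj_v'vl' 0) (adj_v'vl' 1) (leaf_vl' 0) (leaf_vl' 1)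
    | p i => exact pendant_childA _ _ _ (by simp) (adj_ppl i) (adj_ppl' i) (leaf_pl i) (leaf_pl' i)
    | c j => exact pendant_childA _ _ _ (by simp) (adj_ccleaf j 0) (adj_ccleaf j 1) (leaf_cleaf j 0) (leaf_cleaf j 1)
    | x i =>
      by_cases hp : SamePair (WV.x i : WV n m) (WV.xl i) C.a C.b
      · obtain ⟨z, hz⟩ := C.exists_out_some (not_leaf_x i)
        obtain ⟨hzadj, hznp⟩ := C.arc_some hz
        have hPQx := C.pair_shape hp
        refine ⟨some z, hz, Or.inl ?_⟩
        rcases mem_nbr_x (Or.symm hzadj) with rfl | rfl | ⟨j, rfl⟩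
        · refine C.tree_of (not_leaf_p i) (C.noRet_two_pendants (by simp) (adj_ppl i)
            (adj_ppl' i) (leaf_pl i) (leaf_pl' i) ?_ ?_) <;>
            exact fun h => by rcases hPQx _ _ h with ⟨h1, _⟩ | ⟨h1, _⟩ <;> simp at h1
        · exact absurd hp hznp
        · refine C.tree_of (not_leaf_c j) (C.noRet_two_pendants (by simp) (adj_ccleaf j 0)
            (adj_ccleaf j 1) (leaf_cleaf j 0) (leaf_cleaf j 1) ?_ ?_) <;>
            exact fun h => by rcases hPQx _ _ h with ⟨h1, _⟩ | ⟨h1, _⟩ <;> simp at h1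
      · exact ⟨some (WV.xl i), C.to_leaf (adj_xxl i) (leaf_xl i) hp,
          Or.inr (C.leaf_outdeg (leaf_xl i))⟩
    | ul k => exact absurd (C.leaf_outdeg (leaf_ul k)) ho
    | ul' k => exact absurd (C.leaf_outdeg (leaf_ul' k)) ho
    | vl k => exact absurd (C.leaf_outdeg (leaf_vl k)) ho
    | vl' k => exact absurd (C.leaf_outdeg (leaf_vl' k)) ho
    | pl i => exact absurd (C.leaf_outdeg (leaf_pl i)) ho
    | pl' i => exact absurd (C.leaf_outdeg (leaf_pl' i)) ho
    | pl0 => exact absurd (C.leaf_outdeg leaf_pl0) ho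
    | xl i => exact absurd (C.leaf_outdeg (leaf_xl i)) ho
    | cleaf j k => exact absurd (C.leaf_outdeg (leaf_cleaf j k)) ho

end CtxA
/-- Lemma `equiv-funneled`: for the unrooted phylogenetic
network `U` constructed from an instance of Positive 1-in-3 SAT (clauses of
size 3, each variable in exactly three clauses), and for each rooting variant
`R ∈ {A,B}`, `U` has a funneled `C_R`-orientation iff it has a funneled
`C'_R`-orientation, where `C` is the class of rooted phylogenetic networks and
`C'` the class of tree-child rooted phylogenetic networks. -/
theorem funneled_orientation_iff_funneled_treechild_orientation
    (n m : ℕ) (hn : 1 ≤ n) (cl : Fin m → Finset (Fin n))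
    (hsize : ∀ j, (cl j).card = 3)
    (hcnt : ∀ i, (Finset.univ.filter fun j => i ∈ cl j).card = 3) :
    -- Variant A
    ((∃ (a b : WV n m) (D : Option (WV n m) → Option (WV n m) → Prop),
        VariantA (wAdj cl) a b D ∧
        IsRootedPhyloNetwork D none (Option.some '' wLeaves n m) ∧
        Funneled D) ↔
      (∃ (a b : WV n m) (D : Option (WV n m) → Option (WV n m) → Prop),
        VariantA (wAdj cl) a b D ∧
        IsRootedPhyloNetwork D none (Option.some '' wLeaves n m) ∧
        TreeChild D ∧ Funneled D)) ∧
    -- Variant B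
    ((∃ (ρ : WV n m) (D : WV n m → WV n m → Prop),
        IsOrientation (wAdj cl) D ∧
        IsRootedPhyloNetwork D ρ (wLeaves n m \ {ρ}) ∧
        Funneled D) ↔
      (∃ (ρ : WV n m) (D : WV n m → WV n m → Prop),
        IsOrientation (wAdj cl) D ∧
        IsRootedPhyloNetwork D ρ (wLeaves n m \ {ρ}) ∧
        TreeChild D ∧ Funneled D)) := by
  constructor
  · constructor
    · rintro ⟨a, b, D, h1, h2, h3⟩
      exact ⟨a, b, D, h1, h2, CtxA.tcA ⟨a, b, D, h1, h2, h3⟩, h3⟩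
    · rintro ⟨a, b, D, h1, h2, _, h3⟩
      exact ⟨a, b, D, h1, h2, h3⟩
  · constructor
    · rintro ⟨ρ, D, h1, h2, h3⟩
      exact ⟨ρ, D, h1, h2, CtxB.tc ⟨D, ρ, h1, h2, h3⟩, h3⟩
    · rintro ⟨ρ, D, h1, h2, _, h3⟩
      exact ⟨ρ, D, h1, h2, h3⟩

end PaperFormalization
end
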